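/- arXiv:1401.5146 — 11 statements merged into one kernel-verified Lean document; each statement's English description precedes it below -/
import Mathlib

section
/- Let α, β, θ > 0 be real numbers. Then the series ∑_{i=1}^∞ α^i / ∏_{j=1}^i (β + jθ) converges, and its sum p₁ satisfies p₁ = (β/θ) · e^{α/θ} · (α/θ)^{−β/θ} · Γ(β/θ, α/θ) − 1, where Γ(s, y) denotes the lower incomplete Gamma function. -/
open Finset Real Filter Topology MeasureTheory intervalIntegral
open scoped Nat

/-!
With `s = β/θ` and `y = α/θ` the `i`-th term is `s · y^i / (s)_{i+1}`, in Pochhammer symbols.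
Integration by parts gives `γ(s+1, y) = s γ(s, y) - y^s e^{-y}` for the lower incomplete Gamma
function, and iterating it,
`γ(s, y) = y^s e^{-y} ∑_{k<n} y^k / (s)_{k+1} + γ(s+n, y) / (s)_n`.
Since `γ(s+n, y) ≤ y^{s+n} / (s+n)` and `(s)_{n+1} ≥ s · n!`, the remainder is at most
`y^s/s · y^n/n! → 0`.
-/

noncomputable def lowerIncompleteGamma (s y : ℝ) : ℝ :=
  ∫ x in (0 : ℝ)..y, x ^ (s - 1) * exp (-x)

lemma intervalIntegrable_rpow_sub_one_mul_exp_neg {s : ℝ} (hs : 0 < s) (y : ℝ) :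
    IntervalIntegrable (fun x => x ^ (s - 1) * exp (-x)) volume 0 y :=
  (intervalIntegrable_rpow' (by linarith)).mul_continuousOn (by fun_prop)

lemma lowerIncompleteGamma_nonneg (s : ℝ) {y : ℝ} (hy : 0 ≤ y) : 0 ≤ lowerIncompleteGamma s y :=
  integral_nonneg hy fun x hx => by have := hx.1; positivity

lemma lowerIncompleteGamma_le {s y : ℝ} (hs : 0 < s) (hy : 0 ≤ y) :
    lowerIncompleteGamma s y ≤ y ^ s / s := by
  calc lowerIncompleteGamma s y ≤ ∫ x in (0 : ℝ)..y, x ^ (s - 1) :=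
        integral_mono_on hy (intervalIntegrable_rpow_sub_one_mul_exp_neg hs y)
          (intervalIntegrable_rpow' (by linarith)) fun x hx =>
            mul_le_of_le_one_right (rpow_nonneg hx.1 _) (exp_le_one_iff.2 (by linarith [hx.1]))
    _ = y ^ s / s := by
      rw [integral_rpow (Or.inl (by linarith))]
      simp [zero_rpow hs.ne']

lemma lowerIncompleteGamma_add_one {s y : ℝ} (hs : 0 < s) (hy : 0 ≤ y) :
    lowerIncompleteGamma (s + 1) y = s * lowerIncompleteGamma s y - y ^ s * exp (-y) := by
  have hderiv : ∀ x ∈ Set.Ioo 0 y, HasDerivAt (fun x => x ^ s * exp (-x))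
      (s * (x ^ (s - 1) * exp (-x)) - x ^ (s + 1 - 1) * exp (-x)) x := by
    intro x hx
    refine ((hasDerivAt_rpow_const (Or.inl hx.1.ne')).mul (hasDerivAt_neg x).exp).congr_deriv ?_
    rw [add_sub_cancel_right]
    ring
  have hint := intervalIntegrable_rpow_sub_one_mul_exp_neg hs y
  have hint' := intervalIntegrable_rpow_sub_one_mul_exp_neg (s := s + 1) (by linarith) y
  have hFTC := integral_eq_sub_of_hasDerivAt_of_le hy
    ((continuous_rpow_const hs.le).mul (by fun_prop)).continuousOn hderiv
    ((hint.const_mul s).sub hint')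
  rw [integral_sub (hint.const_mul s) hint', intervalIntegral.integral_const_mul] at hFTC
  simp only [Pi.mul_apply, zero_rpow hs.ne', zero_mul, sub_zero] at hFTC
  unfold lowerIncompleteGamma
  linarith

lemma lowerIncompleteGamma_eq_sum_add {s y : ℝ} (hs : 0 < s) (hy : 0 ≤ y) (n : ℕ) :
    lowerIncompleteGamma s y =
      y ^ s * exp (-y) * ∑ k ∈ range n, y ^ k / (ascPochhammer ℝ (k + 1)).eval s
        + lowerIncompleteGamma (s + n) y / (ascPochhammer ℝ n).eval s := by
  induction n with
  | zero => simp
  | succ n ih =>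
    have hrec := lowerIncompleteGamma_add_one (s := s + n) (by positivity) hy
    have hpos := ascPochhammer_pos n s hs
    have hsn : s + n ≠ 0 := by positivity
    rw [ih, sum_range_succ, ascPochhammer_succ_eval, Nat.cast_succ, ← add_assoc, hrec,
      rpow_add' hy hsn, rpow_natCast]
    field_simp
    ring

lemma mul_factorial_le_ascPochhammer_eval_succ {s : ℝ} (hs : 0 ≤ s) (n : ℕ) :
    s * n ! ≤ (ascPochhammer ℝ (n + 1)).eval s := by
  induction n with
  | zero => simp
  | succ n ih =>
    rw [ascPochhammer_succ_eval, Nat.factorial_succ, Nat.cast_mul, Nat.cast_succ]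
    calc s * ((n + 1) * n !) = s * n ! * (n + 1) := by ring
      _ ≤ (ascPochhammer ℝ (n + 1)).eval s * (s + (n + 1)) :=
        mul_le_mul ih (by linarith) (by positivity) (le_trans (by positivity) ih)

lemma tendsto_lowerIncompleteGamma_div_ascPochhammer {s y : ℝ} (hs : 0 < s) (hy : 0 ≤ y) :
    Tendsto (fun n : ℕ => lowerIncompleteGamma (s + n) y / (ascPochhammer ℝ n).eval s)
      atTop (𝓝 0) := by
  have hlim := (FloorSemiring.tendsto_pow_div_factorial_atTop y).const_mul (y ^ s / s)
  rw [mul_zero] at hlim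
  refine squeeze_zero (fun n => div_nonneg (lowerIncompleteGamma_nonneg _ hy)
    (ascPochhammer_pos n s hs).le) (fun n => ?_) hlim
  have hsn : 0 < s + n := by positivity
  have hpos := ascPochhammer_pos n s hs
  calc lowerIncompleteGamma (s + n) y / (ascPochhammer ℝ n).eval s
      ≤ y ^ (s + n) / (s + n) / (ascPochhammer ℝ n).eval s := by
        gcongr; exact lowerIncompleteGamma_le hsn hy
    _ = y ^ s * y ^ n / (ascPochhammer ℝ (n + 1)).eval s := by
        rw [ascPochhammer_succ_eval, rpow_add' hy hsn.ne', rpow_natCast]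
        field_simp
    _ ≤ y ^ s * y ^ n / (s * n !) := by
        gcongr; exact mul_factorial_le_ascPochhammer_eval_succ hs.le n
    _ = y ^ s / s * (y ^ n / n !) := by field_simp

theorem hasSum_pow_div_ascPochhammer {s y : ℝ} (hs : 0 < s) (hy : 0 < y) :
    HasSum (fun k : ℕ => y ^ k / (ascPochhammer ℝ (k + 1)).eval s)
      (exp y * y ^ (-s) * lowerIncompleteGamma s y) := by
  refine (hasSum_iff_tendsto_nat_of_nonneg
    (fun k => div_nonneg (by positivity) (ascPochhammer_pos _ s hs).le) _).2 ?_
  have hlim := ((tendsto_const_nhds (x := lowerIncompleteGamma s y)).sub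
    (tendsto_lowerIncompleteGamma_div_ascPochhammer hs hy.le)).const_mul (exp y * y ^ (-s))
  rw [sub_zero] at hlim
  refine hlim.congr fun n => ?_
  rw [lowerIncompleteGamma_eq_sum_add hs hy.le n, rpow_neg hy.le, exp_neg]
  have := rpow_pos_of_pos hy s
  field_simp
  ring

lemma mul_prod_Icc_add_mul {β θ : ℝ} (hθ : θ ≠ 0) (n : ℕ) :
    β * ∏ j ∈ Icc 1 n, (β + j * θ) = θ ^ (n + 1) * (ascPochhammer ℝ (n + 1)).eval (β / θ) := by
  induction n with
  | zero =>
    simp only [Order.lt_one_iff, Icc_eq_empty_of_lt, prod_empty, mul_one, zero_add,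
      pow_one, ascPochhammer_one, Polynomial.eval_X]
    field_simp
  | succ n ih =>
    rw [prod_Icc_succ_top (by omega), ← mul_assoc, ih, ascPochhammer_succ_eval (n + 1)]
    push_cast
    field_simp
    ring

lemma pow_div_prod_Icc_add_mul (α : ℝ) {β θ : ℝ} (hβ : 0 < β) (hθ : 0 < θ) (n : ℕ) :
    α ^ n / ∏ j ∈ Icc 1 n, (β + j * θ) =
      β / θ * ((α / θ) ^ n / (ascPochhammer ℝ (n + 1)).eval (β / θ)) := by
  have hprod : ∏ j ∈ Icc 1 n, (β + j * θ) =
      θ ^ (n + 1) * (ascPochhammer ℝ (n + 1)).eval (β / θ) / β := by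
    rw [← mul_prod_Icc_add_mul hθ.ne', mul_div_cancel_left₀ _ hβ.ne']
  have := ascPochhammer_pos (n + 1) (β / θ) (by positivity)
  rw [hprod, div_pow]
  field_simp
  ring

/-- For `α, β, θ > 0`, the series `∑_{i=1}^∞ α^i / ∏_{j=1}^i (β + jθ)`
converges with sum `(β/θ)·e^{α/θ}·(α/θ)^{-β/θ}·Γ(β/θ, α/θ) - 1`, where
`Γ(s, y) = ∫₀^y x^{s-1} e^{-x} dx` is the lower incomplete Gamma function. -/
theorem stmt_0 (α β θ : ℝ) (hα : 0 < α) (hβ : 0 < β) (hθ : 0 < θ) :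
    HasSum (fun i : ℕ => α ^ (i + 1) / ∏ j ∈ Finset.Icc 1 (i + 1), (β + (j : ℝ) * θ))
      (β / θ * Real.exp (α / θ) * (α / θ) ^ (-(β / θ)) *
          (∫ x in (0:ℝ)..(α / θ), x ^ (β / θ - 1) * Real.exp (-x)) - 1) := by
  have hsum := (hasSum_nat_add_iff' 1).mpr
    ((hasSum_pow_div_ascPochhammer (div_pos hβ hθ) (div_pos hα hθ)).mul_left (β / θ))
  simp only [sum_range_one, pow_zero, zero_add, ascPochhammer_one, Polynomial.eval_X] at hsum
  have hvalue : β / θ * exp (α / θ) * (α / θ) ^ (-(β / θ)) *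
        (∫ x in (0:ℝ)..(α / θ), x ^ (β / θ - 1) * exp (-x)) - 1 =
      β / θ * (exp (α / θ) * (α / θ) ^ (-(β / θ)) * lowerIncompleteGamma (β / θ) (α / θ))
        - β / θ * (1 / (β / θ)) := by
    unfold lowerIncompleteGamma
    field_simp
  rw [funext fun i => pow_div_prod_Icc_add_mul α hβ hθ (i + 1), hvalue]
  exact hsum
end

section
/- Let α, β, θ > 0 be real numbers, and let p₁ = ∑_{i=1}^∞ α^i / ∏_{j=1}^i (β + jθ) (which converges). Then the series m₁ = ∑_{i=1}^∞ i·α^i / ∏_{j=1}^i (β + jθ) converges and equals ((α − β)/θ)·p₁ + α/θ. -/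
/-!
Write `a i = α^i / ∏_{j=1}^i (β + jθ)`, so `a 0 = 1`. Consecutive terms satisfy
`(β + (i+1)θ) a (i+1) = α a i`, i.e. `(i+1) a (i+1) = (α a i - β a (i+1)) / θ`, and summing this
over `i ≥ 0` gives `(α (a 0 + p₁) - β p₁) / θ`.
-/

theorem hasSum_succ_mul_of_recurrence {𝕜 : Type*} [Field 𝕜] [TopologicalSpace 𝕜]
    [IsTopologicalRing 𝕜] {a : ℕ → 𝕜} {α β θ p : 𝕜} (hθ : θ ≠ 0)
    (hrec : ∀ i : ℕ, (β + ((i : 𝕜) + 1) * θ) * a (i + 1) = α * a i)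
    (hp : HasSum (fun i => a (i + 1)) p) :
    HasSum (fun i : ℕ => ((i : 𝕜) + 1) * a (i + 1)) ((α - β) / θ * p + α / θ * a 0) := by
  have hshift : HasSum (fun i => α * a i) (α * (p + a 0)) := by
    refine (hasSum_nat_add_iff' 1).mp ?_
    simpa [mul_add] using hp.mul_left α
  convert (hshift.sub (hp.mul_left β)).div_const θ using 1
  · ext i
    rw [← hrec i]
    field_simp
    ring
  · field_simp
    ring

theorem pow_div_prod_Icc_succ {𝕜 : Type*} [Field 𝕜] (α β θ : 𝕜) (i : ℕ)
    (hi : β + ((i : 𝕜) + 1) * θ ≠ 0) :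
    (β + ((i : 𝕜) + 1) * θ) * (α ^ (i + 1) / ∏ j ∈ Finset.Icc 1 (i + 1), (β + (j : 𝕜) * θ)) =
      α * (α ^ i / ∏ j ∈ Finset.Icc 1 i, (β + (j : 𝕜) * θ)) := by
  rw [Finset.prod_Icc_succ_top (Nat.le_add_left 1 i), Nat.cast_succ, pow_succ']
  field_simp

theorem stmt_1_general (α β θ : ℝ) (hβ : 0 < β) (hθ : 0 < θ) (p₁ : ℝ)
    (hp₁ : HasSum (fun i : ℕ => α ^ (i + 1) / ∏ j ∈ Finset.Icc 1 (i + 1), (β + (j : ℝ) * θ)) p₁) :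
    HasSum
      (fun i : ℕ => ((i : ℝ) + 1) * α ^ (i + 1) / ∏ j ∈ Finset.Icc 1 (i + 1), (β + (j : ℝ) * θ))
      ((α - β) / θ * p₁ + α / θ) := by
  have h := hasSum_succ_mul_of_recurrence (a := fun i => α ^ i / ∏ j ∈ Finset.Icc 1 i, (β + j * θ))
    hθ.ne' (fun i => pow_div_prod_Icc_succ α β θ i (by positivity)) hp₁
  have ha₀ : α ^ 0 / ∏ j ∈ Finset.Icc 1 (0 : ℕ), (β + (j : ℝ) * θ) = 1 := by simp
  simpa only [mul_div_assoc, ha₀, mul_one] using h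

/-- For `α, β, θ > 0`, if `p₁ = ∑_{i=1}^∞ α^i / ∏_{j=1}^i (β + jθ)`, then
`∑_{i=1}^∞ i·α^i / ∏_{j=1}^i (β + jθ)` converges and equals `((α - β)/θ)·p₁ + α/θ`. -/
theorem stmt_1 (α β θ : ℝ) (hα : 0 < α) (hβ : 0 < β) (hθ : 0 < θ) (p₁ : ℝ)
    (hp₁ : HasSum (fun i : ℕ => α ^ (i + 1) / ∏ j ∈ Finset.Icc 1 (i + 1), (β + (j : ℝ) * θ)) p₁) :
    HasSum
      (fun i : ℕ => ((i : ℝ) + 1) * α ^ (i + 1) / ∏ j ∈ Finset.Icc 1 (i + 1), (β + (j : ℝ) * θ))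
      ((α - β) / θ * p₁ + α / θ) :=
  stmt_1_general α β θ hβ hθ p₁ hp₁
end

section
/- Let α, β, θ > 0 be real numbers, let p₁ = ∑_{i=1}^∞ α^i / ∏_{j=1}^i (β + jθ) and m₁ = ∑_{i=1}^∞ i·α^i / ∏_{j=1}^i (β + jθ) (both convergent). Then the series s₁ = ∑_{i=1}^∞ i²·α^i / ∏_{j=1}^i (β + jθ) converges and equals ((α − β)/θ)·m₁ + (α/θ)·(p₁ + 1). -/
/-- For `α, β, θ > 0`, with `p₁ = ∑_{i=1}^∞ α^i / ∏_{j=1}^i (β + jθ)` and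
`m₁ = ∑_{i=1}^∞ i·α^i / ∏_{j=1}^i (β + jθ)`, the series
`∑_{i=1}^∞ i²·α^i / ∏_{j=1}^i (β + jθ)` converges and equals `((α - β)/θ)·m₁ + (α/θ)·(p₁ + 1)`. -/
theorem stmt_2 (α β θ : ℝ) (hα : 0 < α) (hβ : 0 < β) (hθ : 0 < θ) (p₁ m₁ : ℝ)
    (hp₁ : HasSum (fun i : ℕ => α ^ (i + 1) / ∏ j ∈ Finset.Icc 1 (i + 1), (β + (j : ℝ) * θ)) p₁)
    (hm₁ : HasSum
      (fun i : ℕ => ((i : ℝ) + 1) * α ^ (i + 1) / ∏ j ∈ Finset.Icc 1 (i + 1), (β + (j : ℝ) * θ))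
      m₁) :
    HasSum
      (fun i : ℕ =>
        ((i : ℝ) + 1) ^ 2 * α ^ (i + 1) / ∏ j ∈ Finset.Icc 1 (i + 1), (β + (j : ℝ) * θ))
      ((α - β) / θ * m₁ + α / θ * (p₁ + 1)) := by
  set P : ℕ → ℝ := fun n => ∏ j ∈ Finset.Icc 1 n, (β + (j : ℝ) * θ) with hP
  have hPpos : ∀ n, 0 < P n := fun n => Finset.prod_pos (fun j _ => by positivity)
  have h2 : HasSum (fun i : ℕ => ((i : ℝ) + 2) * α ^ (i + 1) / P (i + 1)) (m₁ + p₁) := by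
    have he : (fun i : ℕ => ((i : ℝ) + 2) * α ^ (i + 1) / P (i + 1))
        = fun i : ℕ => ((i : ℝ) + 1) * α ^ (i + 1) / P (i + 1) + α ^ (i + 1) / P (i + 1) := by
      funext i; ring
    rw [he]; exact hm₁.add hp₁
  have h3 : HasSum (fun i : ℕ => ((i : ℝ) + 1) * α ^ i / P i) (m₁ + p₁ + 1) := by
    have h2' : HasSum (fun n : ℕ => (((n + 1 : ℕ) : ℝ) + 1) * α ^ (n + 1) / P (n + 1))
        (m₁ + p₁) := h2.congr_fun fun n => by push_cast; ring_nf
    have := (hasSum_nat_add_iff (f := fun i : ℕ => ((i : ℝ) + 1) * α ^ i / P i) 1).mp h2'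
    simpa [hP] using this
  have h4 : HasSum
      (fun i : ℕ => (α * (((i : ℝ) + 1) * α ^ i / P i)
        - β * (((i : ℝ) + 1) * α ^ (i + 1) / P (i + 1))) / θ)
      ((α * (m₁ + p₁ + 1) - β * m₁) / θ) :=
    ((h3.mul_left α).sub (hm₁.mul_left β)).div_const θ
  have key : ∀ i : ℕ, ((i : ℝ) + 1) ^ 2 * α ^ (i + 1) / P (i + 1)
      = (α * (((i : ℝ) + 1) * α ^ i / P i)
        - β * (((i : ℝ) + 1) * α ^ (i + 1) / P (i + 1))) / θ := by
    intro i
    have hPs : P (i + 1) = P i * (β + ((i : ℝ) + 1) * θ) := by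
      show (∏ j ∈ Finset.Icc 1 (i + 1), (β + (j : ℝ) * θ))
        = (∏ j ∈ Finset.Icc 1 i, (β + (j : ℝ) * θ)) * (β + ((i : ℝ) + 1) * θ)
      rw [Finset.prod_Icc_succ_top (by omega : 1 ≤ i + 1)]
      push_cast; ring
    have h1 := (hPpos i).ne'
    have h2 := (hPpos (i + 1)).ne'
    rw [hPs]
    rw [hPs] at h2
    field_simp
    ring
  have hval : (α * (m₁ + p₁ + 1) - β * m₁) / θ
      = (α - β) / θ * m₁ + α / θ * (p₁ + 1) := by
    field_simp; ring
  rw [← hval]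
  show HasSum (fun i : ℕ => ((i : ℝ) + 1) ^ 2 * α ^ (i + 1) / P (i + 1)) _
  exact h4.congr_fun fun i => key i
end

section
/- Let α, β, θ, γ > 0. Define p₁ = ∑_{i=1}^∞ α^i / ∏_{j=1}^i (β + jθ), p₂ = ∑_{i=1}^∞ β^i / ∏_{j=1}^i (α + jγ), π₀ = (1 + p₁ + p₂)^{−1}, and for i ∈ ℕ set π_i = π₀ · α^i / ∏_{j=1}^i (β + jθ) and π_{−i} = π₀ · β^i / ∏_{j=1}^i (α + jγ). Then ∑_{i∈ℤ} π_i = 1, every π_i > 0, and the detailed balance equations hold: for every i ∈ ℤ, (α + i⁻·γ)·π_i = (β + (i+1)⁺·θ)·π_{i+1}, where i⁺ = max(i, 0) and i⁻ = max(−i, 0). (Thus (π_i)_{i∈ℤ} is the stationary distribution of the birth–death chain on ℤ with birth rates λ_i = α + i⁻γ and death rates μ_i = β + i⁺θ.) -/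
/-!
The ratios `π (i + 1) / π i` are exactly the ratios of birth to death rates, `α / (β + (i + 1) θ)`
for `i ≥ 0` and `(α + (-i) γ) / β` for `i < 0`, so detailed balance holds term by term. Since
`π₀ > 0` all terms are positive, and summing the two tails gives `π₀ (p₁ + 1 + p₂) = 1`.
-/

open Finset

/-- Equal to `∏_{j=1}^n a / (b + j c)`, the product of the rate ratios along one side of the chain. -/
noncomputable def stationaryWeight (a b c : ℝ) (n : ℕ) : ℝ :=
  a ^ n / ∏ j ∈ Icc 1 n, (b + j * c)

section stationaryWeight

variable {a b c : ℝ}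

@[simp]
theorem stationaryWeight_zero : stationaryWeight a b c 0 = 1 := by
  simp [stationaryWeight]

theorem stationaryWeight_pos (ha : 0 < a) (hb : 0 < b) (hc : 0 ≤ c) (n : ℕ) :
    0 < stationaryWeight a b c n :=
  div_pos (pow_pos ha n) (prod_pos fun _ _ => by positivity)

theorem add_mul_mul_stationaryWeight_succ (n : ℕ) (h : b + (n + 1) * c ≠ 0) :
    (b + (n + 1) * c) * stationaryWeight a b c (n + 1) = a * stationaryWeight a b c n := by
  rw [stationaryWeight, stationaryWeight, prod_Icc_succ_top (by omega), pow_succ, mul_comm,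
    ← mul_div_right_comm, Nat.cast_succ, mul_div_mul_right _ _ h, mul_comm (a ^ n), mul_div_assoc]

end stationaryWeight

/-- For `α, β, θ, γ > 0`, with `p₁, p₂` the two convergent series,
`π₀ = (1 + p₁ + p₂)⁻¹`, and `π_i`, `π_{-i}` defined as in the paper, the family `(π_i)_{i ∈ ℤ}`
sums to `1`, is positive, and satisfies the detailed balance equations
`(α + i⁻·γ)·π_i = (β + (i+1)⁺·θ)·π_{i+1}` for all `i ∈ ℤ`. -/
theorem stmt_3 (α β θ γ : ℝ) (hα : 0 < α) (hβ : 0 < β) (hθ : 0 < θ) (hγ : 0 < γ)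
    (p₁ p₂ π₀ : ℝ)
    (hp₁ : HasSum (fun i : ℕ => α ^ (i + 1) / ∏ j ∈ Finset.Icc 1 (i + 1), (β + (j : ℝ) * θ)) p₁)
    (hp₂ : HasSum (fun i : ℕ => β ^ (i + 1) / ∏ j ∈ Finset.Icc 1 (i + 1), (α + (j : ℝ) * γ)) p₂)
    (hπ₀ : π₀ = (1 + p₁ + p₂)⁻¹)
    (π : ℤ → ℝ)
    (hπpos : ∀ i : ℕ, π (i : ℤ) = π₀ * α ^ i / ∏ j ∈ Finset.Icc 1 i, (β + (j : ℝ) * θ))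
    (hπneg : ∀ i : ℕ, π (-(i : ℤ)) = π₀ * β ^ i / ∏ j ∈ Finset.Icc 1 i, (α + (j : ℝ) * γ)) :
    HasSum π 1 ∧ (∀ i : ℤ, 0 < π i) ∧
      ∀ i : ℤ, (α + ((max (-i) 0 : ℤ) : ℝ) * γ) * π i
        = (β + ((max (i + 1) 0 : ℤ) : ℝ) * θ) * π (i + 1) := by
  have hπ₁ (n : ℕ) : π n = π₀ * stationaryWeight α β θ n := (hπpos n).trans (mul_div_assoc ..)
  have hπ₂ (n : ℕ) : π (-n) = π₀ * stationaryWeight β α γ n := (hπneg n).trans (mul_div_assoc ..)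
  have hp₁_nonneg : 0 ≤ p₁ := hp₁.nonneg fun n => (stationaryWeight_pos hα hβ hθ.le _).le
  have hp₂_nonneg : 0 ≤ p₂ := hp₂.nonneg fun n => (stationaryWeight_pos hβ hα hγ.le _).le
  have hπ₀_pos : 0 < π₀ := hπ₀ ▸ inv_pos.2 (by linarith)
  refine ⟨?_, fun i => ?_, fun i => ?_⟩
  · have hsum := HasSum.of_add_one_of_neg_add_one (f := π)
      ((hp₁.mul_left π₀).congr_fun fun n => by rw [← Nat.cast_succ, hπ₁]; rfl)
      ((hp₂.mul_left π₀).congr_fun fun n => by rw [← Nat.cast_succ, hπ₂]; rfl)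
    convert hsum
    rw [← Nat.cast_zero, hπ₁, stationaryWeight_zero, hπ₀]
    field_simp
    ring
  · obtain ⟨n, rfl | rfl⟩ := i.eq_nat_or_neg
    · rw [hπ₁]; exact mul_pos hπ₀_pos (stationaryWeight_pos hα hβ hθ.le n)
    · rw [hπ₂]; exact mul_pos hπ₀_pos (stationaryWeight_pos hβ hα hγ.le n)
  · cases i with
    | ofNat n =>
      have h := add_mul_mul_stationaryWeight_succ (a := α) n (by positivity : β + (n + 1) * θ ≠ 0)
      rw [Int.ofNat_eq_natCast, show max (-(n : ℤ)) 0 = 0 by omega,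
        show max ((n : ℤ) + 1) 0 = ((n + 1 : ℕ) : ℤ) by omega, ← Nat.cast_succ, hπ₁, hπ₁]
      push_cast
      linear_combination (-π₀) * h
    | negSucc m =>
      have h := add_mul_mul_stationaryWeight_succ (a := β) m (by positivity : α + (m + 1) * γ ≠ 0)
      rw [show max (-Int.negSucc m) 0 = ((m + 1 : ℕ) : ℤ) by omega,
        show max (Int.negSucc m + 1) 0 = 0 by omega, show Int.negSucc m + 1 = -(m : ℤ) by omega,
        show Int.negSucc m = -((m + 1 : ℕ) : ℤ) by omega, hπ₂, hπ₂]
      push_cast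
      linear_combination π₀ * h
end

section
/- Let κ > 0 and let φ be a map sending continuous functions x : [0,∞) → ℝ to continuous functions φ(x) : [0,∞) → ℝ, such that for every t ≥ 0 and all continuous x₁, x₂ : [0,∞) → ℝ, sup_{s∈[0,t]} |φ(x₁)(s) − φ(x₂)(s)| ≤ κ · sup_{s∈[0,t]} |x₁(s) − x₂(s)|. Then for every continuous w : [0,∞) → ℝ there exists a unique continuous y : [0,∞) → ℝ satisfying y(t) = w(t) + ∫₀ᵗ φ(y)(u) du for all t ≥ 0; in particular y(0) = w(0). -/
/-- The sup of `|f|` over the interval `[0, t]`. -/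
noncomputable def supNorm (f : ℝ → ℝ) (t : ℝ) : ℝ :=
  sSup ((fun s => |f s|) '' Set.Icc 0 t)

lemma le_supNorm {f : ℝ → ℝ} {t : ℝ} (hf : ContinuousOn f (Set.Icc 0 t))
    {s : ℝ} (hs : s ∈ Set.Icc 0 t) : |f s| ≤ supNorm f t :=
  le_csSup (isCompact_Icc.bddAbove_image hf.abs) ⟨s, hs, rfl⟩

lemma supNorm_le {f : ℝ → ℝ} {t C : ℝ} (ht : 0 ≤ t)
    (h : ∀ s ∈ Set.Icc 0 t, |f s| ≤ C) : supNorm f t ≤ C :=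
  csSup_le ((Set.nonempty_Icc.2 ht).image _) (by rintro _ ⟨s, hs, rfl⟩; exact h s hs)

lemma causal {κ : ℝ} (hκ : 0 < κ) {φ : (ℝ → ℝ) → (ℝ → ℝ)}
    (hφmap : ∀ x : ℝ → ℝ, ContinuousOn x (Set.Ici 0) → ContinuousOn (φ x) (Set.Ici 0))
    (hφlip : ∀ t : ℝ, 0 ≤ t → ∀ x₁ x₂ : ℝ → ℝ, ContinuousOn x₁ (Set.Ici 0) →
      ContinuousOn x₂ (Set.Ici 0) →
      supNorm (fun s => φ x₁ s - φ x₂ s) t ≤ κ * supNorm (fun s => x₁ s - x₂ s) t)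
    {x₁ x₂ : ℝ → ℝ} (h₁ : ContinuousOn x₁ (Set.Ici 0)) (h₂ : ContinuousOn x₂ (Set.Ici 0))
    {t : ℝ} (ht : 0 ≤ t) (heq : Set.EqOn x₁ x₂ (Set.Icc 0 t)) :
    Set.EqOn (φ x₁) (φ x₂) (Set.Icc 0 t) := by
  intro s hs
  have h0 : supNorm (fun s => x₁ s - x₂ s) t ≤ 0 :=
    supNorm_le ht (fun s hs => by rw [heq hs]; simp)
  have h1 := hφlip t ht x₁ x₂ h₁ h₂
  have h2 : |φ x₁ s - φ x₂ s| ≤ supNorm (fun s => φ x₁ s - φ x₂ s) t :=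
    le_supNorm (((hφmap x₁ h₁).sub (hφmap x₂ h₂)).mono Set.Icc_subset_Ici_self) hs
  have hle : |φ x₁ s - φ x₂ s| ≤ 0 := by nlinarith
  have h3 : φ x₁ s - φ x₂ s = 0 := abs_nonpos_iff.mp hle
  linarith

lemma localFix {κ : ℝ} (hκ : 0 < κ) {φ : (ℝ → ℝ) → (ℝ → ℝ)}
    (hφmap : ∀ x : ℝ → ℝ, ContinuousOn x (Set.Ici 0) → ContinuousOn (φ x) (Set.Ici 0))
    (hφlip : ∀ t : ℝ, 0 ≤ t → ∀ x₁ x₂ : ℝ → ℝ, ContinuousOn x₁ (Set.Ici 0) →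
      ContinuousOn x₂ (Set.Ici 0) →
      supNorm (fun s => φ x₁ s - φ x₂ s) t ≤ κ * supNorm (fun s => x₁ s - x₂ s) t)
    {w : ℝ → ℝ} (hw : ContinuousOn w (Set.Ici 0)) (T : ℝ) (hT : 0 ≤ T) :
    ∃! p : C(Set.Icc (0:ℝ) T, ℝ), ∀ t : Set.Icc (0:ℝ) T,
      p t = w t + ∫ u in (0:ℝ)..(t:ℝ), φ (fun s => p (Set.projIcc 0 T hT s)) u := by
  haveI : Nonempty (Set.Icc (0:ℝ) T) := (Set.nonempty_Icc.2 hT).to_subtype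
  set ext : C(Set.Icc (0:ℝ) T, ℝ) → ℝ → ℝ :=
    fun f s => f (Set.projIcc 0 T hT s) with hext
  have extCont : ∀ f, Continuous (ext f) := fun f => f.continuous.comp continuous_projIcc
  have extEq : ∀ (f) (s : ℝ) (hs : s ∈ Set.Icc 0 T), ext f s = f ⟨s, hs⟩ := by
    intro f s hs; simp [hext, Set.projIcc_of_mem hT hs]
  have gcont : ∀ f, ContinuousOn (φ (ext f)) (Set.Ici 0) :=
    fun f => hφmap _ (extCont f).continuousOn
  have gint : ∀ f (a b : ℝ), 0 ≤ a → 0 ≤ b →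
      IntervalIntegrable (φ (ext f)) MeasureTheory.volume a b := by
    intro f a b ha hb
    apply ContinuousOn.intervalIntegrable
    apply (gcont f).mono
    intro u hu
    rcases Set.mem_uIcc.mp hu with ⟨h, _⟩ | ⟨h, _⟩
    · exact le_trans ha h
    · exact le_trans hb h
  have hprim : ∀ f, ContinuousOn (fun t : ℝ => w t + ∫ u in (0:ℝ)..t, φ (ext f) u)
      (Set.Icc 0 T) := by
    intro f
    apply (hw.mono Set.Icc_subset_Ici_self).add
    have h1 := intervalIntegral.continuousOn_primitive_interval'
      (gint f 0 T le_rfl hT) Set.left_mem_uIcc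
    rwa [Set.uIcc_of_le hT] at h1
  set Φ : C(Set.Icc (0:ℝ) T, ℝ) → C(Set.Icc (0:ℝ) T, ℝ) :=
    fun f => ⟨Set.restrict _ (fun t : ℝ => w t + ∫ u in (0:ℝ)..t, φ (ext f) u),
      (hprim f).restrict⟩ with hΦ
  have Φapp : ∀ f (t : Set.Icc (0:ℝ) T),
      Φ f t = w t + ∫ u in (0:ℝ)..(t:ℝ), φ (ext f) u := fun f t => rfl
  have key : ∀ f g : C(Set.Icc (0:ℝ) T, ℝ), ∀ n : ℕ, ∀ t : Set.Icc (0:ℝ) T,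
      |Φ^[n] f t - Φ^[n] g t| ≤ κ ^ n * (t:ℝ) ^ n / n.factorial * dist f g := by
    intro f g n
    induction n with
    | zero =>
      intro t
      simpa [Real.dist_eq] using ContinuousMap.dist_apply_le_dist (f := f) (g := g) t
    | succ n ih =>
      intro t
      have ht0 : (0:ℝ) ≤ t := t.2.1
      have htT : (t:ℝ) ≤ T := t.2.2
      rw [Function.iterate_succ_apply', Function.iterate_succ_apply']
      set f' := Φ^[n] f with hf'
      set g' := Φ^[n] g with hg'
      have hsub : Φ f' t - Φ g' t
          = ∫ u in (0:ℝ)..(t:ℝ), (φ (ext f') u - φ (ext g') u) := by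
        rw [Φapp, Φapp,
          intervalIntegral.integral_sub (gint f' 0 t le_rfl ht0) (gint g' 0 t le_rfl ht0)]
        ring
      rw [hsub]
      have hptwise : ∀ u ∈ Set.Icc (0:ℝ) (t:ℝ),
          |φ (ext f') u - φ (ext g') u| ≤ κ ^ (n+1) * u ^ n / n.factorial * dist f g := by
        intro u hu
        have hu0 : (0:ℝ) ≤ u := hu.1
        have hut : u ≤ (t:ℝ) := hu.2
        have b1 : |φ (ext f') u - φ (ext g') u|
            ≤ supNorm (fun s => φ (ext f') s - φ (ext g') s) u :=
          le_supNorm (((gcont f').sub (gcont g')).mono Set.Icc_subset_Ici_self) ⟨hu0, le_rfl⟩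
        have b2 := hφlip u hu0 _ _ (extCont f').continuousOn (extCont g').continuousOn
        have b3 : supNorm (fun s => ext f' s - ext g' s) u
            ≤ κ ^ n * u ^ n / n.factorial * dist f g := by
          apply supNorm_le hu0
          intro s hs
          have hsT : s ∈ Set.Icc (0:ℝ) T := ⟨hs.1, hs.2.trans (hut.trans htT)⟩
          rw [extEq f' s hsT, extEq g' s hsT]
          refine (ih ⟨s, hsT⟩).trans ?_
          have hsn : s ^ n ≤ u ^ n := pow_le_pow_left₀ hs.1 hs.2 n
          have hd : (0:ℝ) ≤ dist f g := dist_nonneg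
          have hκn : (0:ℝ) ≤ κ ^ n := by positivity
          have hfac : (0:ℝ) < (n.factorial : ℝ) := by positivity
          gcongr
        have hcomb : |φ (ext f') u - φ (ext g') u|
            ≤ κ * (κ ^ n * u ^ n / n.factorial * dist f g) :=
          b1.trans (b2.trans (mul_le_mul_of_nonneg_left b3 hκ.le))
        refine hcomb.trans_eq ?_
        ring
      refine (intervalIntegral.abs_integral_le_integral_abs ht0).trans ?_
      have hint1 : IntervalIntegrable (fun u => |φ (ext f') u - φ (ext g') u|)
          MeasureTheory.volume 0 (t:ℝ) :=
        ((gint f' 0 t le_rfl ht0).sub (gint g' 0 t le_rfl ht0)).abs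
      have hint2 : IntervalIntegrable
          (fun u : ℝ => κ ^ (n+1) * u ^ n / n.factorial * dist f g)
          MeasureTheory.volume 0 (t:ℝ) := by
        apply Continuous.intervalIntegrable
        fun_prop
      refine (intervalIntegral.integral_mono_on ht0 hint1 hint2 hptwise).trans_eq ?_
      have hre : ∫ u in (0:ℝ)..(t:ℝ), κ ^ (n+1) * u ^ n / n.factorial * dist f g
          = (κ ^ (n+1) / n.factorial * dist f g) * ∫ u in (0:ℝ)..(t:ℝ), u ^ n := by
        rw [← intervalIntegral.integral_const_mul]
        congr 1
        ext u
        ring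
      rw [hre, integral_pow, Nat.factorial_succ]
      have hfac : (n.factorial : ℝ) ≠ 0 := Nat.cast_ne_zero.mpr n.factorial_ne_zero
      have hn1 : ((n:ℝ)+1) ≠ 0 := by positivity
      have h0p : (0:ℝ) ^ (n+1) = 0 := zero_pow (Nat.succ_ne_zero n)
      rw [h0p]
      push_cast
      field_simp
      ring
  have distKey : ∀ n : ℕ, ∀ f g : C(Set.Icc (0:ℝ) T, ℝ),
      dist (Φ^[n] f) (Φ^[n] g) ≤ κ ^ n * T ^ n / n.factorial * dist f g := by
    intro n f g
    rw [ContinuousMap.dist_le (by positivity)]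
    intro x
    rw [Real.dist_eq]
    refine (key f g n x).trans ?_
    have hx0 : (0:ℝ) ≤ x := x.2.1
    have hxT : (x:ℝ) ≤ T := x.2.2
    have hd : (0:ℝ) ≤ dist f g := dist_nonneg
    have hfac : (0:ℝ) < (n.factorial : ℝ) := by positivity
    gcongr
  obtain ⟨n, hn⟩ : ∃ n : ℕ, κ ^ n * T ^ n / n.factorial < 1 := by
    have h := FloorSemiring.tendsto_pow_div_factorial_atTop (K := ℝ) (κ * T)
    have h2 := h.eventually (gt_mem_nhds one_pos)
    obtain ⟨n, hn⟩ := h2.exists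
    exact ⟨n, by rwa [mul_pow] at hn⟩
  set c : ℝ := κ ^ n * T ^ n / n.factorial with hc
  have hc0 : 0 ≤ c := by positivity
  have hlip : LipschitzWith c.toNNReal (Φ^[n]) := by
    apply LipschitzWith.of_dist_le_mul
    intro f g
    rw [Real.coe_toNNReal _ hc0]
    exact distKey n f g
  have hcontr : ContractingWith c.toNNReal (Φ^[n]) := by
    constructor
    · rw [← Real.toNNReal_one]
      exact (Real.toNNReal_lt_toNNReal_iff one_pos).mpr hn
    · exact hlip
  have hfix : Function.IsFixedPt Φ (hcontr.fixedPoint Φ^[n]) :=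
    hcontr.isFixedPt_fixedPoint_iterate
  have huniq : ∀ q : C(Set.Icc (0:ℝ) T, ℝ), Function.IsFixedPt Φ q →
      q = hcontr.fixedPoint Φ^[n] := by
    intro q hq
    exact hcontr.fixedPoint_unique' (hq.iterate n) hcontr.fixedPoint_isFixedPt
  -- translate to the equation form
  have equiv : ∀ p : C(Set.Icc (0:ℝ) T, ℝ),
      (∀ t : Set.Icc (0:ℝ) T,
        p t = w t + ∫ u in (0:ℝ)..(t:ℝ), φ (fun s => p (Set.projIcc 0 T hT s)) u)
      ↔ Function.IsFixedPt Φ p := by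
    intro p
    constructor
    · intro h
      ext t
      rw [Φapp]
      exact (h t).symm
    · intro h t
      conv_lhs => rw [← h]
      rw [Φapp]
  refine ⟨hcontr.fixedPoint Φ^[n], ?_, ?_⟩
  · exact (equiv _).mpr hfix
  · intro q hq
    exact huniq q ((equiv q).mp hq)

/-- If `φ` maps continuous functions on `[0,∞)` to continuous functions on
`[0,∞)` and is Lipschitz in the sense
`sup_{s ∈ [0,t]} |φ(x₁)(s) - φ(x₂)(s)| ≤ κ · sup_{s ∈ [0,t]} |x₁(s) - x₂(s)|`, then for every
continuous `w` there is a unique continuous `y` on `[0,∞)` with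
`y(t) = w(t) + ∫₀ᵗ φ(y)(u) du` for all `t ≥ 0`; in particular `y(0) = w(0)`.
(Functions on `[0,∞)` are modeled as functions on `ℝ` considered on `Set.Ici 0`;
accordingly `φ` only depends on, and uniqueness is asserted on, `Set.Ici 0`.) -/
theorem stmt_4 (κ : ℝ) (hκ : 0 < κ)
    (φ : (ℝ → ℝ) → (ℝ → ℝ))
    (hφmap : ∀ x : ℝ → ℝ, ContinuousOn x (Set.Ici 0) → ContinuousOn (φ x) (Set.Ici 0))
    (hφdep : ∀ x₁ x₂ : ℝ → ℝ, Set.EqOn x₁ x₂ (Set.Ici 0) → Set.EqOn (φ x₁) (φ x₂) (Set.Ici 0))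
    (hφlip : ∀ t : ℝ, 0 ≤ t → ∀ x₁ x₂ : ℝ → ℝ, ContinuousOn x₁ (Set.Ici 0) →
      ContinuousOn x₂ (Set.Ici 0) →
      supNorm (fun s => φ x₁ s - φ x₂ s) t ≤ κ * supNorm (fun s => x₁ s - x₂ s) t)
    (w : ℝ → ℝ) (hw : ContinuousOn w (Set.Ici 0)) :
    ∃ y : ℝ → ℝ,
      (ContinuousOn y (Set.Ici 0) ∧
        (∀ t : ℝ, 0 ≤ t → y t = w t + ∫ u in (0:ℝ)..t, φ y u) ∧
        y 0 = w 0) ∧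
      ∀ y' : ℝ → ℝ, ContinuousOn y' (Set.Ici 0) →
        (∀ t : ℝ, 0 ≤ t → y' t = w t + ∫ u in (0:ℝ)..t, φ y' u) →
        Set.EqOn y' y (Set.Ici 0) := by
  have hT : ∀ n : ℕ, (0:ℝ) ≤ (n:ℝ)+1 := fun n => by positivity
  have H := fun n : ℕ => localFix hκ hφmap hφlip hw ((n:ℝ)+1) (hT n)
  set sol : ∀ n : ℕ, C(Set.Icc (0:ℝ) ((n:ℝ)+1), ℝ) := fun n => (H n).choose with hsol
  have solEq : ∀ (n : ℕ) (t : Set.Icc (0:ℝ) ((n:ℝ)+1)),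
      sol n t = w t + ∫ u in (0:ℝ)..(t:ℝ),
        φ (fun s => sol n (Set.projIcc 0 ((n:ℝ)+1) (hT n) s)) u :=
    fun n => (H n).choose_spec.1
  have solUniq : ∀ (n : ℕ) (q : C(Set.Icc (0:ℝ) ((n:ℝ)+1), ℝ)),
      (∀ t : Set.Icc (0:ℝ) ((n:ℝ)+1),
        q t = w t + ∫ u in (0:ℝ)..(t:ℝ),
          φ (fun s => q (Set.projIcc 0 ((n:ℝ)+1) (hT n) s)) u) → q = sol n :=
    fun n => (H n).choose_spec.2
  set ext : ∀ n : ℕ, ℝ → ℝ :=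
    fun n s => sol n (Set.projIcc 0 ((n:ℝ)+1) (hT n) s) with hextdef
  have extCont : ∀ n, Continuous (ext n) :=
    fun n => (sol n).continuous.comp continuous_projIcc
  have extEq : ∀ (n : ℕ) (s : ℝ) (hs : s ∈ Set.Icc (0:ℝ) ((n:ℝ)+1)),
      ext n s = sol n ⟨s, hs⟩ := by
    intro n s hs
    simp [hextdef, Set.projIcc_of_mem (hT n) hs]
  have agree : ∀ n m : ℕ, n ≤ m → ∀ (t : ℝ) (h1 : t ∈ Set.Icc (0:ℝ) ((n:ℝ)+1))
      (h2 : t ∈ Set.Icc (0:ℝ) ((m:ℝ)+1)), sol m ⟨t, h2⟩ = sol n ⟨t, h1⟩ := by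
    intro n m hnm
    have hnm' : ((n:ℝ)+1) ≤ ((m:ℝ)+1) := by
      have : (n:ℝ) ≤ (m:ℝ) := Nat.cast_le.mpr hnm
      linarith
    have hsub : Set.Icc (0:ℝ) ((n:ℝ)+1) ⊆ Set.Icc (0:ℝ) ((m:ℝ)+1) :=
      Set.Icc_subset_Icc le_rfl hnm'
    set q : C(Set.Icc (0:ℝ) ((n:ℝ)+1), ℝ) :=
      (sol m).comp ⟨Set.inclusion hsub, continuous_inclusion hsub⟩ with hqdef
    have hq : ∀ t : Set.Icc (0:ℝ) ((n:ℝ)+1),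
        q t = w t + ∫ u in (0:ℝ)..(t:ℝ),
          φ (fun s => q (Set.projIcc 0 ((n:ℝ)+1) (hT n) s)) u := by
      intro t
      have ht0 : (0:ℝ) ≤ t := t.2.1
      have htm : (t:ℝ) ∈ Set.Icc (0:ℝ) ((m:ℝ)+1) := hsub t.2
      have e1 : q t = sol m ⟨t, htm⟩ := rfl
      rw [e1, solEq m ⟨t, htm⟩]
      congr 1
      apply intervalIntegral.integral_congr
      rw [Set.uIcc_of_le ht0]
      have hqext : Continuous (fun s => q (Set.projIcc 0 ((n:ℝ)+1) (hT n) s)) :=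
        q.continuous.comp continuous_projIcc
      apply causal hκ hφmap hφlip (extCont m).continuousOn hqext.continuousOn ht0
      intro s hs
      have hsn : s ∈ Set.Icc (0:ℝ) ((n:ℝ)+1) := ⟨hs.1, hs.2.trans t.2.2⟩
      have hsm : s ∈ Set.Icc (0:ℝ) ((m:ℝ)+1) := hsub hsn
      show ext m s = q (Set.projIcc 0 ((n:ℝ)+1) (hT n) s)
      rw [extEq m s hsm, Set.projIcc_of_mem (hT n) hsn]
      rfl
    have hqs := solUniq n q hq
    intro t h1 h2
    have e2 : q ⟨t, h1⟩ = sol m ⟨t, h2⟩ := rfl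
    rw [← e2, hqs]
  set y : ℝ → ℝ := fun t => sol ⌊t⌋₊ (Set.projIcc 0 ((⌊t⌋₊:ℝ)+1) (hT ⌊t⌋₊) t) with hydef
  have yval : ∀ (n : ℕ) (t : ℝ) (ht : t ∈ Set.Icc (0:ℝ) ((n:ℝ)+1)),
      y t = sol n ⟨t, ht⟩ := by
    intro n t ht
    have htm : t ∈ Set.Icc (0:ℝ) ((⌊t⌋₊:ℝ)+1) := ⟨ht.1, (Nat.lt_floor_add_one t).le⟩
    have e1 : y t = sol ⌊t⌋₊ ⟨t, htm⟩ := by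
      simp only [hydef, Set.projIcc_of_mem (hT ⌊t⌋₊) htm]
    rw [e1]
    rcases le_total n ⌊t⌋₊ with h | h
    · exact agree n ⌊t⌋₊ h t ht htm
    · exact (agree ⌊t⌋₊ n h t htm ht).symm
  have ycont : ContinuousOn y (Set.Ici 0) := by
    intro t ht
    have htn : t < (⌊t⌋₊:ℝ)+1 := Nat.lt_floor_add_one t
    have hev : ∀ᶠ s in nhdsWithin t (Set.Ici 0), y s = ext ⌊t⌋₊ s := by
      filter_upwards [nhdsWithin_le_nhds (Iio_mem_nhds htn), self_mem_nhdsWithin]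
        with s hs1 hs2
      have hmem : s ∈ Set.Icc (0:ℝ) ((⌊t⌋₊:ℝ)+1) := ⟨hs2, (Set.mem_Iio.mp hs1).le⟩
      rw [yval ⌊t⌋₊ s hmem, extEq ⌊t⌋₊ s hmem]
    have htmem : t ∈ Set.Icc (0:ℝ) ((⌊t⌋₊:ℝ)+1) := ⟨ht, htn.le⟩
    exact ((extCont ⌊t⌋₊).continuousWithinAt).congr_of_eventuallyEq hev
      (by rw [yval ⌊t⌋₊ t htmem, extEq ⌊t⌋₊ t htmem])
  have yeq : ∀ t : ℝ, 0 ≤ t → y t = w t + ∫ u in (0:ℝ)..t, φ y u := by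
    intro t ht
    have htn : t ∈ Set.Icc (0:ℝ) ((⌊t⌋₊:ℝ)+1) := ⟨ht, (Nat.lt_floor_add_one t).le⟩
    rw [yval ⌊t⌋₊ t htn, solEq ⌊t⌋₊ ⟨t, htn⟩]
    congr 1
    apply intervalIntegral.integral_congr
    rw [Set.uIcc_of_le ht]
    apply causal hκ hφmap hφlip (extCont ⌊t⌋₊).continuousOn ycont ht
    intro s hs
    have hmem : s ∈ Set.Icc (0:ℝ) ((⌊t⌋₊:ℝ)+1) := ⟨hs.1, hs.2.trans htn.2⟩
    show ext ⌊t⌋₊ s = y s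
    rw [extEq ⌊t⌋₊ s hmem, yval ⌊t⌋₊ s hmem]
  refine ⟨y, ⟨ycont, yeq, ?_⟩, ?_⟩
  · have := yeq 0 le_rfl
    simpa using this
  · intro y' hy' heq' t ht
    have htn : t ∈ Set.Icc (0:ℝ) ((⌊t⌋₊:ℝ)+1) := ⟨ht, (Nat.lt_floor_add_one t).le⟩
    set n := ⌊t⌋₊ with hn
    set q : C(Set.Icc (0:ℝ) ((n:ℝ)+1), ℝ) :=
      ⟨Set.restrict _ y', (hy'.mono Set.Icc_subset_Ici_self).restrict⟩ with hqdef
    have hqext : Continuous (fun s => q (Set.projIcc 0 ((n:ℝ)+1) (hT n) s)) :=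
      q.continuous.comp continuous_projIcc
    have hq : ∀ s : Set.Icc (0:ℝ) ((n:ℝ)+1),
        q s = w s + ∫ u in (0:ℝ)..(s:ℝ),
          φ (fun u => q (Set.projIcc 0 ((n:ℝ)+1) (hT n) u)) u := by
      intro s
      have hs0 : (0:ℝ) ≤ s := s.2.1
      show y' s = _
      rw [heq' s hs0]
      congr 1
      apply intervalIntegral.integral_congr
      rw [Set.uIcc_of_le hs0]
      apply causal hκ hφmap hφlip hy' hqext.continuousOn hs0
      intro u hu
      have hmem : u ∈ Set.Icc (0:ℝ) ((n:ℝ)+1) := ⟨hu.1, hu.2.trans s.2.2⟩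
      show y' u = q (Set.projIcc 0 ((n:ℝ)+1) (hT n) u)
      rw [Set.projIcc_of_mem (hT n) hmem]
      rfl
    have hqs := solUniq n q hq
    have e1 : y' t = q ⟨t, htn⟩ := rfl
    rw [e1, hqs]
    exact (yval n t htn).symm
end

section
/- Let α, β, θ, γ > 0 with α > β, and let x₀ < 0. Set t₁ = γ^{−1} log((α − β − γx₀)/(α − β)) (which is positive and finite). Then the function x defined by x(t) = (x₀ − (α − β)/γ)·e^{−γt} + (α − β)/γ for t ∈ [0, t₁] and x(t) = ((α − β)/θ)·(1 − e^{−θ(t − t₁)}) for t ≥ t₁ is continuous, satisfies x(t₁) = 0 with x(t) < 0 for t < t₁, and solves the fluid equation x(t) = x₀ + (α − β)t − θ∫₀ᵗ x⁺(s) ds + γ∫₀ᵗ x⁻(s) ds for all t ≥ 0. -/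
/-!
The first branch increases to `0` exactly at `t₁`, so on `[0, t₁]` it is nonpositive and the
fluid equation there is the linear ODE `x' = (α - β) - γ x`; on `[t₁, ∞)` the second branch is
nonnegative and the equation is `x' = (α - β) - θ x`. The two exponential relaxations solve
these ODEs and meet at `t₁` with the common value `0` and common slope `α - β`, so the glued
function has derivative `(α - β) - θ x⁺ + γ x⁻` everywhere, and the fluid equation follows
from the fundamental theorem of calculus.
-/

/-- `x : ℝ → ℝ`, viewed as a function on `[0,∞)`, is a continuous solution of the fluid
equation `x(t) = x₀ + (α - β)t - θ∫₀ᵗ x⁺(s) ds + γ∫₀ᵗ x⁻(s) ds` for `t ≥ 0`. -/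
def IsFluidSolution (α β θ γ x₀ : ℝ) (x : ℝ → ℝ) : Prop :=
  ContinuousOn x (Set.Ici 0) ∧
    ∀ t : ℝ, 0 ≤ t →
      x t = x₀ + (α - β) * t - θ * (∫ s in (0:ℝ)..t, max (x s) 0)
        + γ * (∫ s in (0:ℝ)..t, max (-x s) 0)

open Real Set

theorem hasDerivAt_of_eqOn_Iic_of_eqOn_Ici {x f g f' : ℝ → ℝ} {a : ℝ}
    (hxf : EqOn x f (Iic a)) (hxg : EqOn x g (Ici a))
    (hf : ∀ t ≤ a, HasDerivAt f (f' t) t) (hg : ∀ t, a ≤ t → HasDerivAt g (f' t) t)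
    (t : ℝ) : HasDerivAt x (f' t) t := by
  rcases lt_trichotomy t a with hlt | rfl | hgt
  · refine (hf t hlt.le).congr_of_eventuallyEq ?_
    filter_upwards [Iio_mem_nhds hlt] with s hs
    exact hxf (mem_Iic.2 hs.le)
  · have hleft := (hf t le_rfl).hasDerivWithinAt.congr hxf (hxf (mem_Iic.2 le_rfl))
    have hright := (hg t le_rfl).hasDerivWithinAt.congr hxg (hxg (mem_Ici.2 le_rfl))
    simpa only [Iic_union_Ici, hasDerivWithinAt_univ] using hleft.union hright
  · refine (hg t hgt.le).congr_of_eventuallyEq ?_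
    filter_upwards [Ioi_mem_nhds hgt] with s hs
    exact hxg (mem_Ici.2 hs.le)

theorem isFluidSolution_of_hasDerivAt {α β θ γ x₀ : ℝ} {x : ℝ → ℝ} (h0 : x 0 = x₀)
    (hderiv : ∀ t, 0 ≤ t → HasDerivAt x (α - β - θ * max (x t) 0 + γ * max (-x t) 0) t) :
    IsFluidSolution α β θ γ x₀ x := by
  have hcont : ContinuousOn x (Ici 0) := fun t ht =>
    (hderiv t ht).continuousAt.continuousWithinAt
  refine ⟨hcont, fun t ht => ?_⟩
  have hIcc : ContinuousOn x (uIcc 0 t) :=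
    hcont.mono (by rw [uIcc_of_le ht]; exact Icc_subset_Ici_self)
  have hpos : IntervalIntegrable (fun s => max (x s) 0) MeasureTheory.volume 0 t :=
    (hIcc.sup continuousOn_const).intervalIntegrable
  have hneg : IntervalIntegrable (fun s => max (-x s) 0) MeasureTheory.volume 0 t :=
    (hIcc.neg.sup continuousOn_const).intervalIntegrable
  have hftc := intervalIntegral.integral_eq_sub_of_hasDerivAt
    (fun s hs => hderiv s (by rw [uIcc_of_le ht] at hs; exact hs.1))
    (((intervalIntegrable_const.sub (hpos.const_mul θ)).add (hneg.const_mul γ)))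
  rw [intervalIntegral.integral_add ((intervalIntegrable_const.sub (hpos.const_mul θ)))
      (hneg.const_mul γ), intervalIntegral.integral_sub intervalIntegrable_const
      (hpos.const_mul θ), intervalIntegral.integral_const, intervalIntegral.integral_const_mul,
      intervalIntegral.integral_const_mul, h0, smul_eq_mul, sub_zero] at hftc
  linarith

theorem hasDerivAt_relaxation {k : ℝ} (hk : k ≠ 0) (c y₀ t : ℝ) :
    HasDerivAt (fun s => (y₀ - c / k) * exp (-(k * s)) + c / k)
      (c - k * ((y₀ - c / k) * exp (-(k * t)) + c / k)) t := by
  have hlin : HasDerivAt (fun s => -(k * s)) (-k) t := by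
    simpa using ((hasDerivAt_id t).const_mul k).fun_neg
  have hexp := hlin.exp
  refine ((hexp.const_mul (y₀ - c / k)).add_const (c / k)).congr_deriv ?_
  field_simp
  ring

theorem hasDerivAt_relaxation_from_zero {k : ℝ} (hk : k ≠ 0) (c t₀ t : ℝ) :
    HasDerivAt (fun s => c / k * (1 - exp (-(k * (s - t₀)))))
      (c - k * (c / k * (1 - exp (-(k * (t - t₀)))))) t := by
  have hlin : HasDerivAt (fun s => -(k * (s - t₀))) (-k) t := by
    simpa using (((hasDerivAt_id t).sub_const t₀).const_mul k).fun_neg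
  have hexp := hlin.exp
  refine ((hexp.const_sub 1).const_mul (c / k)).congr_deriv ?_
  field_simp
  ring

theorem strictMono_relaxation {k c y₀ : ℝ} (hk : 0 < k) (hy₀ : y₀ < c / k) :
    StrictMono fun s => (y₀ - c / k) * exp (-(k * s)) + c / k := fun s t hst => by
  have hexp : exp (-(k * t)) < exp (-(k * s)) := exp_lt_exp.2 (by nlinarith)
  nlinarith

theorem relaxation_log_eq_zero {k c y₀ : ℝ} (hk : k ≠ 0) (hratio : 0 < (c - k * y₀) / c) :
    (y₀ - c / k) * exp (-(k * (k⁻¹ * log ((c - k * y₀) / c)))) + c / k = 0 := by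
  have hc : c ≠ 0 := by rintro rfl; simp at hratio
  have hd : c - y₀ * k ≠ 0 := by rintro hd; simp [mul_comm k, hd] at hratio
  rw [mul_inv_cancel_left₀ hk, exp_neg, exp_log hratio, inv_div, mul_comm k y₀]
  field_simp
  ring

theorem relaxation_from_zero_nonneg {k c t₀ t : ℝ} (hk : 0 < k) (hc : 0 ≤ c)
    (ht : t₀ ≤ t) : 0 ≤ c / k * (1 - exp (-(k * (t - t₀)))) :=
  mul_nonneg (div_nonneg hc hk.le)
    (sub_nonneg.2 (exp_le_one_iff.2 (neg_nonpos.2 (mul_nonneg hk.le (sub_nonneg.2 ht)))))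

theorem stmt_8_general (α β θ γ x₀ t₁ : ℝ) (hθ : 0 < θ) (hγ : 0 < γ)
    (hβα : β < α) (hx₀ : x₀ < 0)
    (ht₁ : t₁ = γ⁻¹ * Real.log ((α - β - γ * x₀) / (α - β)))
    (x : ℝ → ℝ)
    (hx : ∀ t : ℝ, x t =
      if t ≤ t₁ then (x₀ - (α - β) / γ) * Real.exp (-(γ * t)) + (α - β) / γ
      else (α - β) / θ * (1 - Real.exp (-(θ * (t - t₁))))) :
    0 < t₁ ∧ ContinuousOn x (Set.Ici 0) ∧ x t₁ = 0 ∧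
      (∀ t : ℝ, 0 ≤ t → t < t₁ → x t < 0) ∧ IsFluidSolution α β θ γ x₀ x := by
  have hc : 0 < α - β := sub_pos.2 hβα
  have hratio : 1 < (α - β - γ * x₀) / (α - β) := by
    rw [one_lt_div hc]; nlinarith
  have ht₁pos : 0 < t₁ := ht₁ ▸ mul_pos (inv_pos.2 hγ) (log_pos hratio)
  have hfirst_mono := strictMono_relaxation hγ (lt_of_lt_of_le hx₀ (div_pos hc hγ).le)
  have hzero : (x₀ - (α - β) / γ) * exp (-(γ * t₁)) + (α - β) / γ = 0 :=
    ht₁ ▸ relaxation_log_eq_zero hγ.ne' (zero_lt_one.trans hratio)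
  have hxf : ∀ t ≤ t₁, x t = (x₀ - (α - β) / γ) * exp (-(γ * t)) + (α - β) / γ :=
    fun t ht => by rw [hx, if_pos ht]
  have hxg : ∀ t, t₁ ≤ t → x t = (α - β) / θ * (1 - exp (-(θ * (t - t₁)))) := by
    intro t ht
    rcases ht.lt_or_eq with hlt | heq
    · rw [hx, if_neg (not_le.2 hlt)]
    · simp [← heq, hxf t₁ le_rfl, hzero]
  have hsol : IsFluidSolution α β θ γ x₀ x := by
    refine isFluidSolution_of_hasDerivAt (by rw [hxf 0 ht₁pos.le]; simp) fun t _ =>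
      hasDerivAt_of_eqOn_Iic_of_eqOn_Ici
        (f' := fun t => α - β - θ * max (x t) 0 + γ * max (-x t) 0) hxf hxg ?_ ?_ t
    · intro t ht
      have hnonpos : x t ≤ 0 := hxf t ht ▸ hzero ▸ hfirst_mono.monotone ht
      rw [max_eq_right hnonpos, max_eq_left (neg_nonneg.2 hnonpos), hxf t ht]
      exact (hasDerivAt_relaxation hγ.ne' (α - β) x₀ t).congr_deriv (by ring)
    · intro t ht
      have hnonneg : 0 ≤ x t := hxg t ht ▸ relaxation_from_zero_nonneg hθ hc.le ht
      rw [max_eq_left hnonneg, max_eq_right (neg_nonpos.2 hnonneg), hxg t ht]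
      exact (hasDerivAt_relaxation_from_zero hθ.ne' (α - β) t₁ t).congr_deriv (by ring)
  exact ⟨ht₁pos, hsol.1, hxf t₁ le_rfl ▸ hzero,
    fun t _ ht => hxf t ht.le ▸ hzero ▸ hfirst_mono ht, hsol⟩

/-- For `α > β` and `x₀ < 0`, with
`t₁ = γ⁻¹ log((α - β - γx₀)/(α - β)) > 0`, the piecewise function
`x(t) = (x₀ - (α - β)/γ)·e^{-γt} + (α - β)/γ` on `[0, t₁]` and
`x(t) = ((α - β)/θ)·(1 - e^{-θ(t - t₁)})` for `t ≥ t₁` is continuous, vanishes at `t₁`,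
is negative on `[0, t₁)`, and solves the fluid equation. -/
theorem stmt_8 (α β θ γ x₀ t₁ : ℝ) (hα : 0 < α) (hβ : 0 < β) (hθ : 0 < θ) (hγ : 0 < γ)
    (hβα : β < α) (hx₀ : x₀ < 0)
    (ht₁ : t₁ = γ⁻¹ * Real.log ((α - β - γ * x₀) / (α - β)))
    (x : ℝ → ℝ)
    (hx : ∀ t : ℝ, x t =
      if t ≤ t₁ then (x₀ - (α - β) / γ) * Real.exp (-(γ * t)) + (α - β) / γ
      else (α - β) / θ * (1 - Real.exp (-(θ * (t - t₁))))) :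
    0 < t₁ ∧ ContinuousOn x (Set.Ici 0) ∧ x t₁ = 0 ∧
      (∀ t : ℝ, 0 ≤ t → t < t₁ → x t < 0) ∧ IsFluidSolution α β θ γ x₀ x :=
  stmt_8_general α β θ γ x₀ t₁ hθ hγ hβα hx₀ ht₁ x hx
end

section
/- Let α, β, θ, γ > 0 with α < β, and let x₀ ≤ 0. Then the function x(t) = (x₀ − (α − β)/γ)·e^{−γt} + (α − β)/γ satisfies x(t) ≤ 0 for all t ≥ 0 and solves the fluid equation x(t) = x₀ + (α − β)t − θ∫₀ᵗ x⁺(s) ds + γ∫₀ᵗ x⁻(s) ds for all t ≥ 0. -/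
open Real Set intervalIntegral

theorem eq_add_mul_sub_integral_of_hasDerivAt {x : ℝ → ℝ} {δ γ : ℝ}
    (hx : ∀ s, HasDerivAt x (δ - γ * x s) s) (t : ℝ) :
    x t = x 0 + δ * t - γ * ∫ s in (0:ℝ)..t, x s := by
  have hcont : Continuous x := continuous_iff_continuousAt.2 fun s ↦ (hx s).continuousAt
  have hftc : ∫ s in (0:ℝ)..t, (δ - γ * x s) = x t - x 0 :=
    integral_eq_sub_of_hasDerivAt (fun s _ ↦ hx s)
      ((continuous_const.sub (continuous_const.mul hcont)).intervalIntegrable 0 t)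
  rw [integral_sub intervalIntegrable_const ((hcont.intervalIntegrable 0 t).const_mul γ),
    integral_const, integral_const_mul, smul_eq_mul, sub_zero] at hftc
  linarith

theorem hasDerivAt_exp_relaxation {δ γ x₀ : ℝ} (hγ : γ ≠ 0) (t : ℝ) :
    HasDerivAt (fun t ↦ (x₀ - δ / γ) * exp (-(γ * t)) + δ / γ)
      (δ - γ * ((x₀ - δ / γ) * exp (-(γ * t)) + δ / γ)) t := by
  have hexp : HasDerivAt (fun t ↦ exp (-(γ * t))) (exp (-(γ * t)) * -(γ * 1)) t :=
    ((hasDerivAt_id t).const_mul γ).neg.exp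
  refine ((hexp.const_mul (x₀ - δ / γ)).add_const (δ / γ)).congr_deriv ?_
  field_simp
  ring

theorem exp_relaxation_nonpos {c γ x₀ t : ℝ} (hc : c ≤ 0) (hx₀ : x₀ ≤ 0) (hγ : 0 ≤ γ)
    (ht : 0 ≤ t) : (x₀ - c) * exp (-(γ * t)) + c ≤ 0 := by
  have he : exp (-(γ * t)) ≤ 1 := exp_le_one_iff.2 (neg_nonpos.2 (mul_nonneg hγ ht))
  calc (x₀ - c) * exp (-(γ * t)) + c = x₀ * exp (-(γ * t)) + c * (1 - exp (-(γ * t))) := by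
        ring
    _ ≤ 0 := add_nonpos (mul_nonpos_of_nonpos_of_nonneg hx₀ (exp_pos _).le)
        (mul_nonpos_of_nonpos_of_nonneg hc (sub_nonneg.2 he))

theorem isFluidSolution_of_nonpos {α β θ γ x₀ : ℝ} {x : ℝ → ℝ}
    (hcont : ContinuousOn x (Ici 0)) (hnonpos : ∀ t, 0 ≤ t → x t ≤ 0)
    (hlin : ∀ t, 0 ≤ t → x t = x₀ + (α - β) * t - γ * ∫ s in (0:ℝ)..t, x s) :
    IsFluidSolution α β θ γ x₀ x := by
  refine ⟨hcont, fun t ht ↦ ?_⟩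
  have hpos : ∫ s in (0:ℝ)..t, max (x s) 0 = 0 := by
    refine (integral_congr (g := fun _ ↦ (0:ℝ)) fun s hs ↦ ?_).trans integral_zero
    rw [uIcc_of_le ht] at hs
    exact max_eq_right (hnonpos s hs.1)
  have hneg : ∫ s in (0:ℝ)..t, max (-x s) 0 = -∫ s in (0:ℝ)..t, x s := by
    rw [← integral_neg]
    refine integral_congr fun s hs ↦ ?_
    rw [uIcc_of_le ht] at hs
    exact max_eq_left (neg_nonneg.2 (hnonpos s hs.1))
  rw [hpos, hneg, hlin t ht]
  ring

theorem stmt_9_general (α β θ γ x₀ : ℝ) (hγ : 0 < γ)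
    (hαβ : α < β) (hx₀ : x₀ ≤ 0)
    (x : ℝ → ℝ)
    (hx : ∀ t : ℝ, x t = (x₀ - (α - β) / γ) * Real.exp (-(γ * t)) + (α - β) / γ) :
    (∀ t : ℝ, 0 ≤ t → x t ≤ 0) ∧ IsFluidSolution α β θ γ x₀ x := by
  obtain rfl : x = fun t ↦ (x₀ - (α - β) / γ) * exp (-(γ * t)) + (α - β) / γ := funext hx
  have hderiv := hasDerivAt_exp_relaxation (δ := α - β) (x₀ := x₀) hγ.ne'
  have hnonpos : ∀ t : ℝ, 0 ≤ t → (x₀ - (α - β) / γ) * exp (-(γ * t)) + (α - β) / γ ≤ 0 :=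
    fun t ↦ exp_relaxation_nonpos (div_nonpos_of_nonpos_of_nonneg (by linarith) hγ.le) hx₀ hγ.le
  refine ⟨hnonpos, isFluidSolution_of_nonpos ?_ hnonpos fun t _ ↦ ?_⟩
  · exact fun t _ ↦ (hderiv t).continuousAt.continuousWithinAt
  · simpa using eq_add_mul_sub_integral_of_hasDerivAt hderiv t

/-- For `α < β` and `x₀ ≤ 0`, the function
`x(t) = (x₀ - (α - β)/γ)·e^{-γt} + (α - β)/γ` is nonpositive on `[0,∞)` and solves the fluid
equation. -/
theorem stmt_9 (α β θ γ x₀ : ℝ) (hα : 0 < α) (hβ : 0 < β) (hθ : 0 < θ) (hγ : 0 < γ)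
    (hαβ : α < β) (hx₀ : x₀ ≤ 0)
    (x : ℝ → ℝ)
    (hx : ∀ t : ℝ, x t = (x₀ - (α - β) / γ) * Real.exp (-(γ * t)) + (α - β) / γ) :
    (∀ t : ℝ, 0 ≤ t → x t ≤ 0) ∧ IsFluidSolution α β θ γ x₀ x :=
  stmt_9_general α β θ γ x₀ hγ hαβ hx₀ x hx
end

section
/- Let α, β, θ, γ > 0 and x₀ ∈ ℝ, and let x : [0,∞) → ℝ be a continuous solution of the fluid equation x(t) = x₀ + (α − β)t − θ∫₀ᵗ x⁺(s) ds + γ∫₀ᵗ x⁻(s) ds. Then lim_{t→∞} x(t) = (α − β)/θ if α ≥ β, and lim_{t→∞} x(t) = (α − β)/γ if α < β. -/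
open Set Filter Topology Real

def fluidRate (θ γ a : ℝ) : ℝ := θ * max a 0 - γ * max (-a) 0

lemma monotone_fluidRate_sub_mul {θ γ m : ℝ} (hθ : m ≤ θ) (hγ : m ≤ γ) :
    Monotone fun a ↦ fluidRate θ γ a - m * a := by
  intro a b hab
  simp only [fluidRate]
  rcases le_total a 0 with ha | ha <;> rcases le_total b 0 with hb | hb <;>
    simp only [max_eq_left, max_eq_right, ha, hb, neg_nonneg, neg_nonpos] <;>
    nlinarith

lemma mul_sq_sub_le_mul_fluidRate_sub {θ γ m : ℝ} (hθ : m ≤ θ) (hγ : m ≤ γ) (a b : ℝ) :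
    m * (a - b) ^ 2 ≤ (a - b) * (fluidRate θ γ a - fluidRate θ γ b) := by
  have hmono := monotone_fluidRate_sub_mul hθ hγ
  have key : 0 ≤ (a - b) * ((fluidRate θ γ a - m * a) - (fluidRate θ γ b - m * b)) := by
    rcases le_total a b with h | h
    · exact mul_nonneg_of_nonpos_of_nonpos (by linarith) (by linarith [hmono h])
    · exact mul_nonneg (by linarith) (by linarith [hmono h])
  linarith

lemma fluidRate_div_left {θ : ℝ} (hθ : 0 < θ) (γ : ℝ) {c : ℝ} (hc : 0 ≤ c) :
    fluidRate θ γ (c / θ) = c := by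
  have : 0 ≤ c / θ := div_nonneg hc hθ.le
  rw [fluidRate, max_eq_left this, max_eq_right (by linarith), mul_div_cancel₀ c hθ.ne']
  ring

lemma fluidRate_div_right (θ : ℝ) {γ : ℝ} (hγ : 0 < γ) {c : ℝ} (hc : c ≤ 0) :
    fluidRate θ γ (c / γ) = c := by
  have : c / γ ≤ 0 := div_nonpos_of_nonpos_of_nonneg hc hγ.le
  rw [fluidRate, max_eq_right this, max_eq_left (by linarith), mul_neg, mul_div_cancel₀ c hγ.ne']
  ring

lemma hasDerivAt_integral_of_continuousOn_Ici {f : ℝ → ℝ} (hf : ContinuousOn f (Ici 0))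
    {t : ℝ} (ht : 0 < t) : HasDerivAt (fun u ↦ ∫ s in (0 : ℝ)..u, f s) (f t) t :=
  intervalIntegral.integral_hasDerivAt_right
    (hf.mono (by simp [uIcc_of_le ht.le, Icc_subset_Ici_self])).intervalIntegrable
    ((hf.mono Ioi_subset_Ici_self).stronglyMeasurableAtFilter isOpen_Ioi t ht)
    (hf.continuousAt (Ici_mem_nhds ht))

lemma IsFluidSolution.hasDerivAt {α β θ γ x₀ : ℝ} {x : ℝ → ℝ} (hx : IsFluidSolution α β θ γ x₀ x)
    {t : ℝ} (ht : 0 < t) : HasDerivAt x (α - β - fluidRate θ γ (x t)) t := by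
  obtain ⟨hc, heq⟩ := hx
  have hpos := hasDerivAt_integral_of_continuousOn_Ici
    (hc.sup (continuousOn_const (c := 0))) ht
  have hneg := hasDerivAt_integral_of_continuousOn_Ici
    (hc.neg.sup (continuousOn_const (c := 0))) ht
  have hrhs := ((((hasDerivAt_id t).const_mul (α - β)).const_add x₀).sub (hpos.const_mul θ)).add
    (hneg.const_mul γ)
  refine (hrhs.congr_deriv ?_).congr_of_eventuallyEq ?_
  · simp only [fluidRate, Pi.neg_apply]
    ring
  · filter_upwards [Ici_mem_nhds ht] with u hu using heq u hu

lemma abs_sub_le_mul_exp_of_hasDerivAt {x x' : ℝ → ℝ} {L m : ℝ} (hc : ContinuousOn x (Ici 0))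
    (hd : ∀ t, 0 < t → HasDerivAt x (x' t) t)
    (hdiss : ∀ t, 0 < t → m * (x t - L) ^ 2 ≤ -((x t - L) * x' t)) {t : ℝ} (ht : 0 ≤ t) :
    |x t - L| ≤ |x 0 - L| * exp (-(m * t)) := by
  set W : ℝ → ℝ := fun t ↦ exp (2 * m * t) * (x t - L) ^ 2
  have hW : ∀ s, 0 < s → HasDerivAt W
      (exp (2 * m * s) * (2 * (m * (x s - L) ^ 2 + (x s - L) * x' s))) s := by
    intro s hs
    have := (((hasDerivAt_id s).const_mul (2 * m)).exp).mul (((hd s hs).sub_const L).fun_pow 2)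
    exact this.congr_deriv (by simp only [id]; ring)
  have hanti : AntitoneOn W (Ici 0) := by
    refine antitoneOn_of_deriv_nonpos (convex_Ici 0) ?_ ?_ ?_
    · exact (continuous_exp.comp (continuous_const.mul continuous_id)).continuousOn.mul
        ((hc.sub continuousOn_const).pow 2)
    · rw [interior_Ici]
      exact fun s hs ↦ (hW s hs).differentiableAt.differentiableWithinAt
    · rw [interior_Ici]
      intro s hs
      rw [(hW s hs).deriv]
      have := hdiss s hs
      exact mul_nonpos_of_nonneg_of_nonpos (exp_pos _).le (by linarith)
  have hsq : (x t - L) ^ 2 ≤ ((x 0 - L) * exp (-(m * t))) ^ 2 := by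
    have := hanti self_mem_Ici ht ht
    have hexp : exp (2 * m * t) * exp (-(m * t)) ^ 2 = 1 := by
      rw [← exp_nat_mul, ← exp_add]; push_cast; ring_nf; exact exp_zero
    simp only [W, mul_zero, exp_zero, one_mul] at this
    nlinarith [exp_pos (2 * m * t), sq_nonneg (exp (-(m * t)))]
  rw [sq_le_sq, abs_mul, abs_of_pos (exp_pos _)] at hsq
  exact hsq

lemma tendsto_of_abs_sub_le_mul_exp {x : ℝ → ℝ} {L C m : ℝ} (hm : 0 < m)
    (h : ∀ᶠ t in atTop, |x t - L| ≤ C * exp (-(m * t))) : Tendsto x atTop (𝓝 L) := by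
  rw [tendsto_iff_norm_sub_tendsto_zero]
  refine squeeze_zero' (Eventually.of_forall fun t ↦ norm_nonneg _) h ?_
  simpa using (tendsto_exp_neg_atTop_nhds_zero.comp (tendsto_id.const_mul_atTop hm)).const_mul C

lemma IsFluidSolution.tendsto {α β θ γ x₀ L : ℝ} {x : ℝ → ℝ} (hx : IsFluidSolution α β θ γ x₀ x)
    (hθ : 0 < θ) (hγ : 0 < γ) (hL : fluidRate θ γ L = α - β) : Tendsto x atTop (𝓝 L) := by
  refine tendsto_of_abs_sub_le_mul_exp (C := |x 0 - L|) (lt_min hθ hγ) ?_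
  filter_upwards [eventually_ge_atTop 0] with t ht
  refine abs_sub_le_mul_exp_of_hasDerivAt hx.1 (fun t ht ↦ hx.hasDerivAt ht) (fun t _ ↦ ?_) ht
  have := mul_sq_sub_le_mul_fluidRate_sub (min_le_left θ γ) (min_le_right θ γ) (x t) L
  rw [hL] at this
  linarith

theorem stmt_11_general (α β θ γ x₀ : ℝ) (hθ : 0 < θ) (hγ : 0 < γ)
    (x : ℝ → ℝ) (hx : IsFluidSolution α β θ γ x₀ x) :
    (β ≤ α → Filter.Tendsto x Filter.atTop (nhds ((α - β) / θ))) ∧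
    (α < β → Filter.Tendsto x Filter.atTop (nhds ((α - β) / γ))) :=
  ⟨fun h ↦ hx.tendsto hθ hγ (fluidRate_div_left hθ γ (sub_nonneg.2 h)),
    fun h ↦ hx.tendsto hθ hγ (fluidRate_div_right θ hγ (sub_nonpos.2 h.le))⟩

/-- Any continuous solution of the fluid equation converges as `t → ∞` to
`(α - β)/θ` if `α ≥ β`, and to `(α - β)/γ` if `α < β`. -/
theorem stmt_11 (α β θ γ x₀ : ℝ) (hα : 0 < α) (hβ : 0 < β) (hθ : 0 < θ) (hγ : 0 < γ)
    (x : ℝ → ℝ) (hx : IsFluidSolution α β θ γ x₀ x) :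
    (β ≤ α → Filter.Tendsto x Filter.atTop (nhds ((α - β) / θ))) ∧
    (α < β → Filter.Tendsto x Filter.atTop (nhds ((α - β) / γ))) :=
  stmt_11_general α β θ γ x₀ hθ hγ x hx
end

section
/- Let α, β, θ > 0 and m₀ ∈ ℝ. Define m(t) = (m₀ − (α − β)/θ)·e^{−θt} + (α − β)/θ for t ≥ 0, and let s̃ : [0,∞) → ℝ be a differentiable function satisfying s̃'(t) = −2θ·s̃(t) + (2α − 2β)·m(t) + θ·|m(t)| + α + β for all t ≥ 0. Then lim_{t→∞} s̃(t) = ((α − β)/θ)² + max{α, β}/θ. -/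
/-
Write the equation as `s' = -2θ s + g(t)`. Since `m(t) → k := (α - β)/θ`, the forcing term
`g` tends to `(2α - 2β) k + θ |k| + α + β`, and for a linear equation `u' = -a u + g` with
`a > 0` every solution tends to `lim g / a`: the integrating factor `e^{a t}` turns
`u' ≤ -a u + c` into the monotonicity of `(u - c/a) e^{a t}`, so `u` eventually lies below
any level above `c / a`.
Finally `θ |k| = |α - β|` and `α + β + |α - β| = 2 max α β` identify the limit.
-/

open Set Filter Topology Real

theorem sub_le_of_hasDerivWithinAt_le_neg_mul_add {u u' : ℝ → ℝ} {a c t₀ : ℝ}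
    (ha : a ≠ 0) (hu : ∀ x ∈ Ici t₀, HasDerivWithinAt u (u' x) (Ici t₀) x)
    (hu' : ∀ x ∈ Ici t₀, u' x ≤ -a * u x + c) {x : ℝ} (hx : t₀ ≤ x) :
    u x - c / a ≤ (u t₀ - c / a) * exp (-(a * (x - t₀))) := by
  set E : ℝ → ℝ := fun x ↦ exp (a * (x - t₀))
  have hE : ∀ x, HasDerivAt E (a * E x) x := fun x ↦ by
    simpa [E, mul_comm] using (((hasDerivAt_id x).sub_const t₀).const_mul a).exp
  have hyd : ∀ x ∈ Ici t₀, HasDerivWithinAt (fun x ↦ (u x - c / a) * E x)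
      ((u' x + a * u x - c) * E x) (Ici t₀) x := fun x hx ↦ by
    refine (((hu x hx).sub_const (c / a)).mul (hE x).hasDerivWithinAt).congr_deriv ?_
    field_simp
    ring
  have hanti : AntitoneOn (fun x ↦ (u x - c / a) * E x) (Ici t₀) := by
    refine antitoneOn_of_hasDerivWithinAt_nonpos (convex_Ici t₀)
      (f' := fun x ↦ (u' x + a * u x - c) * E x)
      (fun y hy ↦ (hyd y hy).continuousWithinAt) (fun y hy ↦ ?_) (fun y hy ↦ ?_)
    · rw [interior_Ici] at hy ⊢
      exact (hyd y (Ioi_subset_Ici_self hy)).mono Ioi_subset_Ici_self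
    · rw [interior_Ici] at hy
      exact mul_nonpos_of_nonpos_of_nonneg (by linarith [hu' y (Ioi_subset_Ici_self hy)])
        (exp_pos _).le
  have := hanti self_mem_Ici hx hx
  simp only [E, sub_self, mul_zero, exp_zero, mul_one] at this
  calc u x - c / a = (u x - c / a) * E x * exp (-(a * (x - t₀))) := by
        simp [E, mul_assoc, ← exp_add]
    _ ≤ _ := by gcongr

theorem eventually_lt_of_hasDerivWithinAt_eq_neg_mul_add {u g : ℝ → ℝ} {a c t₀ b : ℝ}
    (ha : 0 < a) (hu : ∀ x ∈ Ici t₀, HasDerivWithinAt u (-a * u x + g x) (Ici t₀) x)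
    (hg : Tendsto g atTop (𝓝 c)) (hb : c / a < b) : ∀ᶠ x in atTop, u x < b := by
  obtain ⟨c', hcc', hc'⟩ : ∃ c', c < c' ∧ c' / a < b :=
    ⟨(c + a * b) / 2, by linarith [(div_lt_iff₀' ha).1 hb],
      (div_lt_iff₀' ha).2 (by linarith [(div_lt_iff₀' ha).1 hb])⟩
  obtain ⟨N, hN⟩ := eventually_atTop.1 (hg.eventually (gt_mem_nhds hcc'))
  set T := max N t₀
  have hT : t₀ ≤ T := le_max_right N t₀
  have hbound : ∀ x ∈ Ici T, u x - c' / a ≤ (u T - c' / a) * exp (-(a * (x - T))) :=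
    fun x hx ↦ sub_le_of_hasDerivWithinAt_le_neg_mul_add ha.ne'
      (fun y hy ↦ (hu y (hT.trans hy)).mono (Ici_subset_Ici.2 hT))
      (fun y hy ↦ by linarith [hN y ((le_max_left N t₀).trans hy)]) hx
  have hdecay : Tendsto (fun x ↦ (u T - c' / a) * exp (-(a * (x - T)))) atTop (𝓝 0) := by
    simpa [sub_eq_add_neg] using (tendsto_exp_neg_atTop_nhds_zero.comp <|
      (tendsto_atTop_add_const_right _ (-T) tendsto_id).const_mul_atTop ha).const_mul
        (u T - c' / a)
  filter_upwards [hdecay.eventually (gt_mem_nhds (sub_pos.2 hc')), eventually_ge_atTop T]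
    with x hx hxT
  linarith [hbound x hxT]

theorem tendsto_of_hasDerivWithinAt_eq_neg_mul_add {u g : ℝ → ℝ} {a c t₀ : ℝ} (ha : 0 < a)
    (hu : ∀ x ∈ Ici t₀, HasDerivWithinAt u (-a * u x + g x) (Ici t₀) x)
    (hg : Tendsto g atTop (𝓝 c)) : Tendsto u atTop (𝓝 (c / a)) := by
  refine tendsto_order.2
    ⟨fun b hb ↦ ?_, fun b hb ↦ eventually_lt_of_hasDerivWithinAt_eq_neg_mul_add ha hu hg hb⟩
  have hneg := eventually_lt_of_hasDerivWithinAt_eq_neg_mul_add (u := -u) (g := -g) (b := -b) ha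
    (fun x hx ↦ (hu x hx).neg.congr_deriv (by simp only [Pi.neg_apply]; ring)) hg.neg
    (by rw [neg_div]; linarith)
  filter_upwards [hneg] with x hx
  simpa using hx

theorem stmt_13_general (α β θ m₀ : ℝ) (hθ : 0 < θ)
    (m : ℝ → ℝ)
    (hm : ∀ t : ℝ, m t = (m₀ - (α - β) / θ) * Real.exp (-(θ * t)) + (α - β) / θ)
    (s : ℝ → ℝ)
    (hs : ∀ t : ℝ, 0 ≤ t →
      HasDerivWithinAt s (-(2 * θ) * s t + (2 * α - 2 * β) * m t + θ * |m t| + α + β)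
        (Set.Ici 0) t) :
    Filter.Tendsto s Filter.atTop (nhds (((α - β) / θ) ^ 2 + max α β / θ)) := by
  set k := (α - β) / θ
  have hmk : Tendsto m atTop (𝓝 k) := by
    rw [funext hm]
    simpa using ((tendsto_exp_neg_atTop_nhds_zero.comp
      (tendsto_id.const_mul_atTop hθ)).const_mul (m₀ - k)).add_const k
  have hforce : Tendsto (fun t ↦ (2 * α - 2 * β) * m t + θ * |m t| + α + β) atTop
      (𝓝 ((2 * α - 2 * β) * k + θ * |k| + α + β)) :=
    (((hmk.const_mul _).add (hmk.abs.const_mul θ)).add_const α).add_const β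
  have hlim : ((2 * α - 2 * β) * k + θ * |k| + α + β) / (2 * θ) = k ^ 2 + max α β / θ := by
    simp only [k]
    rw [show max α β = _ from sup_eq_half_smul_add_add_abs_sub' ℝ α β, abs_sub_comm β α,
      smul_eq_mul, abs_div, abs_of_pos hθ]
    field_simp
    ring
  rw [← hlim]
  exact tendsto_of_hasDerivWithinAt_eq_neg_mul_add (by positivity)
    (fun t ht ↦ (hs t ht).congr_deriv (by ring)) hforce

/-- Let `m(t) = (m₀ - (α - β)/θ)·e^{-θt} + (α - β)/θ`, and let `s̃` be a
differentiable function on `[0,∞)` with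
`s̃'(t) = -2θ·s̃(t) + (2α - 2β)·m(t) + θ·|m(t)| + α + β` for all `t ≥ 0`. Then
`s̃(t) → ((α - β)/θ)² + max{α, β}/θ` as `t → ∞`. -/
theorem stmt_13 (α β θ m₀ : ℝ) (hα : 0 < α) (hβ : 0 < β) (hθ : 0 < θ)
    (m : ℝ → ℝ)
    (hm : ∀ t : ℝ, m t = (m₀ - (α - β) / θ) * Real.exp (-(θ * t)) + (α - β) / θ)
    (s : ℝ → ℝ)
    (hs : ∀ t : ℝ, 0 ≤ t →
      HasDerivWithinAt s (-(2 * θ) * s t + (2 * α - 2 * β) * m t + θ * |m t| + α + β)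
        (Set.Ici 0) t) :
    Filter.Tendsto s Filter.atTop (nhds (((α - β) / θ) ^ 2 + max α β / θ)) :=
  stmt_13_general α β θ m₀ hθ m hm s hs
end

section
/- Let θ, γ, σ > 0 and μ ∈ ℝ, and let ψ(x) = ψ(x; μ²/σ², μ, σ), i.e., ψ(x) = (C/√θ)·e^{μ²/(θσ²)}·φ(x; μ/θ, σ²/(2θ)) for x ≥ 0 and ψ(x) = (C/√γ)·e^{μ²/(γσ²)}·φ(x; μ/γ, σ²/(2γ)) for x < 0, with C = [ (1/√θ)·e^{μ²/(θσ²)}·(1 − Φ(0; μ/θ, σ²/(2θ))) + (1/√γ)·e^{μ²/(γσ²)}·Φ(0; μ/γ, σ²/(2γ)) ]^{−1}. Then ψ is positive and continuous on ℝ (with both one-sided limits at 0 equal to C/(σ√π)), ψ is differentiable at every x ≠ 0 with σ²·ψ'(x) = 2·(μ − θx⁺ + γx⁻)·ψ(x), and ∫_ℝ ψ(x) dx = 1. (Thus ψ is the stationary density of the one-dimensional diffusion with piecewise-linear drift μ − θx⁺ + γx⁻ and constant diffusion coefficient σ²; taking (μ, σ) = (c, a) gives the stationary density of the heavy-traffic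 diffusion limit X̂, and taking (μ, σ) = (0, b) gives the limiting density of the diffusion limit Z.) -/
/-- Density of the normal distribution with mean `ξ` and variance `η`. -/
noncomputable def normPdf (ξ η x : ℝ) : ℝ :=
  (Real.sqrt (2 * Real.pi * η))⁻¹ * Real.exp (-((x - ξ) ^ 2) / (2 * η))

/-- Cumulative distribution function of the normal distribution with mean `ξ` and variance `η`. -/
noncomputable def normCdf (ξ η x : ℝ) : ℝ :=
  ∫ u in Set.Iic x, normPdf ξ η u

/-- The normalizing constant `C = C(κ, μ, σ)` from the paper. -/
noncomputable def Cconst (θ γ σ κ μ : ℝ) : ℝ :=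
  ((Real.sqrt θ)⁻¹ * Real.exp (κ / θ) * (1 - normCdf (μ / θ) (σ ^ 2 / (2 * θ)) 0)
    + (Real.sqrt γ)⁻¹ * Real.exp (κ / γ) * normCdf (μ / γ) (σ ^ 2 / (2 * γ)) 0)⁻¹

/-- The function `ψ(x; κ, μ, σ)` from the paper. -/
noncomputable def psiFun (θ γ σ κ μ : ℝ) (x : ℝ) : ℝ :=
  if 0 ≤ x then
    Cconst θ γ σ κ μ / Real.sqrt θ * Real.exp (κ / θ) * normPdf (μ / θ) (σ ^ 2 / (2 * θ)) x
  else
    Cconst θ γ σ κ μ / Real.sqrt γ * Real.exp (κ / γ) * normPdf (μ / γ) (σ ^ 2 / (2 * γ)) x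

open MeasureTheory Set

lemma normPdf_pos (ξ : ℝ) {η : ℝ} (hη : 0 < η) (x : ℝ) : 0 < normPdf ξ η x := by
  unfold normPdf
  have h1 : 0 < Real.sqrt (2 * Real.pi * η) :=
    Real.sqrt_pos.2 (by positivity)
  positivity

lemma normPdf_eq_gaussian (ξ : ℝ) {η : ℝ} (hη : 0 < η) :
    normPdf ξ η = ProbabilityTheory.gaussianPDFReal ξ ⟨η, hη.le⟩ := rfl

lemma integrable_normPdf (ξ : ℝ) {η : ℝ} (hη : 0 < η) : Integrable (normPdf ξ η) := by
  rw [normPdf_eq_gaussian ξ hη]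
  exact ProbabilityTheory.integrable_gaussianPDFReal ξ ⟨η, hη.le⟩

lemma integral_normPdf (ξ : ℝ) {η : ℝ} (hη : 0 < η) : ∫ x, normPdf ξ η x = 1 := by
  rw [normPdf_eq_gaussian ξ hη]
  exact ProbabilityTheory.integral_gaussianPDFReal_eq_one ξ (fun h => hη.ne' (congrArg NNReal.toReal h))

lemma setIntegral_normPdf_pos (ξ : ℝ) {η : ℝ} (hη : 0 < η) {s : Set ℝ}
    (hs0 : 0 < volume s) : 0 < ∫ x in s, normPdf ξ η x := by
  refine (setIntegral_pos_iff_support_of_nonneg_ae ?_ ?_).2 ?_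
  · exact Filter.Eventually.of_forall fun x => (normPdf_pos ξ hη x).le
  · exact (integrable_normPdf ξ hη).integrableOn
  · have hsup : Function.support (normPdf ξ η) = univ :=
      Set.eq_univ_of_forall fun x => (normPdf_pos ξ hη x).ne'
    rwa [hsup, Set.univ_inter]

lemma normCdf_zero_pos (ξ : ℝ) {η : ℝ} (hη : 0 < η) : 0 < normCdf ξ η 0 :=
  setIntegral_normPdf_pos ξ hη (by simp)

lemma normCdf_zero_lt_one (ξ : ℝ) {η : ℝ} (hη : 0 < η) : normCdf ξ η 0 < 1 := by
  have hsplit : (∫ x in Iic (0:ℝ), normPdf ξ η x) + ∫ x in Ioi (0:ℝ), normPdf ξ η x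
      = ∫ x, normPdf ξ η x :=
    intervalIntegral.integral_Iic_add_Ioi (integrable_normPdf ξ hη).integrableOn
      (integrable_normPdf ξ hη).integrableOn
  have hpos : 0 < ∫ x in Ioi (0:ℝ), normPdf ξ η x :=
    setIntegral_normPdf_pos ξ hη (by simp)
  have := integral_normPdf ξ hη
  rw [this] at hsplit
  unfold normCdf
  linarith

lemma hasDerivAt_normPdf (ξ : ℝ) {η : ℝ} (hη : 0 < η) (x : ℝ) :
    HasDerivAt (normPdf ξ η) (-(x - ξ) / η * normPdf ξ η x) x := by
  have h1 : HasDerivAt (fun y : ℝ => -((y - ξ) ^ 2) / (2 * η)) (-(x - ξ) / η) x := by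
    have h2 : HasDerivAt (fun y : ℝ => -((y - ξ) ^ 2) / (2 * η))
        (-((2 : ℕ) * (x - ξ) ^ 1 * 1) / (2 * η)) x :=
      (((hasDerivAt_id x).sub_const ξ).pow 2).neg.div_const (2 * η)
    convert h2 using 1
    field_simp
    ring
  have h3 := (h1.exp).const_mul ((Real.sqrt (2 * Real.pi * η))⁻¹)
  have h4 : HasDerivAt (normPdf ξ η)
      ((Real.sqrt (2 * Real.pi * η))⁻¹ * (Real.exp (-((x - ξ) ^ 2) / (2 * η)) * (-(x - ξ) / η)))
      x := h3
  convert h4 using 1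
  unfold normPdf
  ring

lemma piece_at_zero {θ σ : ℝ} (hθ : 0 < θ) (hσ : 0 < σ) (μ : ℝ) :
    (Real.sqrt θ)⁻¹ * Real.exp ((μ ^ 2 / σ ^ 2) / θ) * normPdf (μ / θ) (σ ^ 2 / (2 * θ)) 0
      = (σ * Real.sqrt Real.pi)⁻¹ := by
  unfold normPdf
  have h1 : Real.sqrt θ * Real.sqrt (2 * Real.pi * (σ ^ 2 / (2 * θ))) = σ * Real.sqrt Real.pi := by
    rw [← Real.sqrt_mul hθ.le]
    have : θ * (2 * Real.pi * (σ ^ 2 / (2 * θ))) = σ ^ 2 * Real.pi := by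
      field_simp
    rw [this, Real.sqrt_mul (sq_nonneg σ), Real.sqrt_sq hσ.le]
  have h2 : Real.exp ((μ ^ 2 / σ ^ 2) / θ)
      * Real.exp (-(((0:ℝ) - μ / θ) ^ 2) / (2 * (σ ^ 2 / (2 * θ)))) = 1 := by
    rw [← Real.exp_add, Real.exp_eq_one_iff]
    field_simp
    ring
  calc (Real.sqrt θ)⁻¹ * Real.exp ((μ ^ 2 / σ ^ 2) / θ)
        * ((Real.sqrt (2 * Real.pi * (σ ^ 2 / (2 * θ))))⁻¹
          * Real.exp (-(((0:ℝ) - μ / θ) ^ 2) / (2 * (σ ^ 2 / (2 * θ)))))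
      = (Real.sqrt θ * Real.sqrt (2 * Real.pi * (σ ^ 2 / (2 * θ))))⁻¹
        * (Real.exp ((μ ^ 2 / σ ^ 2) / θ)
          * Real.exp (-(((0:ℝ) - μ / θ) ^ 2) / (2 * (σ ^ 2 / (2 * θ))))) := by
        rw [mul_inv]; ring
    _ = (σ * Real.sqrt Real.pi)⁻¹ := by rw [h1, h2, mul_one]

/-- For `θ, γ, σ > 0` and `μ ∈ ℝ`, the function
`ψ(·) = ψ(·; μ²/σ², μ, σ)` is positive and continuous on `ℝ` (with value `C/(σ√π)` at `0`,
which is the common value of both one-sided limits), is differentiable at every `x ≠ 0` with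
`σ²·ψ'(x) = 2·(μ - θx⁺ + γx⁻)·ψ(x)`, and integrates to `1`: it is the stationary density of the
one-dimensional diffusion with drift `μ - θx⁺ + γx⁻` and diffusion coefficient `σ²`. -/
theorem stmt_15 (θ γ σ μ : ℝ) (hθ : 0 < θ) (hγ : 0 < γ) (hσ : 0 < σ) :
    (∀ x : ℝ, 0 < psiFun θ γ σ (μ ^ 2 / σ ^ 2) μ x) ∧
    Continuous (psiFun θ γ σ (μ ^ 2 / σ ^ 2) μ) ∧
    psiFun θ γ σ (μ ^ 2 / σ ^ 2) μ 0
      = Cconst θ γ σ (μ ^ 2 / σ ^ 2) μ / (σ * Real.sqrt Real.pi) ∧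
    (∀ x : ℝ, x ≠ 0 → ∃ d : ℝ, HasDerivAt (psiFun θ γ σ (μ ^ 2 / σ ^ 2) μ) d x ∧
      σ ^ 2 * d = 2 * (μ - θ * max x 0 + γ * max (-x) 0) * psiFun θ γ σ (μ ^ 2 / σ ^ 2) μ x) ∧
    (∫ x : ℝ, psiFun θ γ σ (μ ^ 2 / σ ^ 2) μ x) = 1 := by
  set κ := μ ^ 2 / σ ^ 2 with hκ
  have hηθ : 0 < σ ^ 2 / (2 * θ) := by positivity
  have hηγ : 0 < σ ^ 2 / (2 * γ) := by positivity
  set D := (Real.sqrt θ)⁻¹ * Real.exp (κ / θ) * (1 - normCdf (μ / θ) (σ ^ 2 / (2 * θ)) 0)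
    + (Real.sqrt γ)⁻¹ * Real.exp (κ / γ) * normCdf (μ / γ) (σ ^ 2 / (2 * γ)) 0 with hD
  have hDpos : 0 < D := by
    have h1 : 0 < (Real.sqrt θ)⁻¹ := inv_pos.2 (Real.sqrt_pos.2 hθ)
    have h2 : 0 < (Real.sqrt γ)⁻¹ := inv_pos.2 (Real.sqrt_pos.2 hγ)
    have h3 : 0 < 1 - normCdf (μ / θ) (σ ^ 2 / (2 * θ)) 0 :=
      sub_pos.2 (normCdf_zero_lt_one _ hηθ)
    have h4 : 0 < normCdf (μ / γ) (σ ^ 2 / (2 * γ)) 0 := normCdf_zero_pos _ hηγ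
    have h5 : 0 < Real.exp (κ / θ) := Real.exp_pos _
    have h6 : 0 < Real.exp (κ / γ) := Real.exp_pos _
    positivity
  have hCeq : Cconst θ γ σ κ μ = D⁻¹ := rfl
  have hC : 0 < Cconst θ γ σ κ μ := by rw [hCeq]; exact inv_pos.2 hDpos
  have hpos : ∀ x : ℝ, 0 < psiFun θ γ σ κ μ x := by
    intro x
    unfold psiFun
    split_ifs
    · exact mul_pos (mul_pos (div_pos hC (Real.sqrt_pos.2 hθ)) (Real.exp_pos _))
        (normPdf_pos _ hηθ x)
    · exact mul_pos (mul_pos (div_pos hC (Real.sqrt_pos.2 hγ)) (Real.exp_pos _))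
        (normPdf_pos _ hηγ x)
  have hzeroθ : Cconst θ γ σ κ μ / Real.sqrt θ * Real.exp (κ / θ)
      * normPdf (μ / θ) (σ ^ 2 / (2 * θ)) 0 = Cconst θ γ σ κ μ * (σ * Real.sqrt Real.pi)⁻¹ := by
    rw [div_eq_mul_inv, mul_assoc, mul_assoc, ← mul_assoc ((Real.sqrt θ)⁻¹),
      piece_at_zero hθ hσ μ]
  have hzeroγ : Cconst θ γ σ κ μ / Real.sqrt γ * Real.exp (κ / γ)
      * normPdf (μ / γ) (σ ^ 2 / (2 * γ)) 0 = Cconst θ γ σ κ μ * (σ * Real.sqrt Real.pi)⁻¹ := by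
    rw [div_eq_mul_inv, mul_assoc, mul_assoc, ← mul_assoc ((Real.sqrt γ)⁻¹),
      piece_at_zero hγ hσ μ]
  have hcont : Continuous (psiFun θ γ σ κ μ) := by
    unfold psiFun
    refine Continuous.if_le ?_ ?_ continuous_const continuous_id ?_
    · unfold normPdf; fun_prop
    · unfold normPdf; fun_prop
    · intro a ha
      rw [← ha]
      rw [hzeroθ, hzeroγ]
  refine ⟨hpos, hcont, ?_, ?_, ?_⟩
  · show psiFun θ γ σ κ μ 0 = Cconst θ γ σ κ μ / (σ * Real.sqrt Real.pi)
    unfold psiFun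
    rw [if_pos le_rfl, hzeroθ, div_eq_mul_inv]
  · intro x hx
    rcases hx.lt_or_gt with hxneg | hxpos
    · set a := Cconst θ γ σ κ μ / Real.sqrt γ * Real.exp (κ / γ) with ha
      have hev : psiFun θ γ σ κ μ =ᶠ[nhds x]
          fun y => a * normPdf (μ / γ) (σ ^ 2 / (2 * γ)) y := by
        filter_upwards [Iio_mem_nhds hxneg] with y hy
        unfold psiFun
        rw [if_neg (not_le.2 (show y < 0 from hy))]
      have hd := (hasDerivAt_normPdf (μ / γ) hηγ x).const_mul a
      refine ⟨_, hd.congr_of_eventuallyEq hev, ?_⟩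
      have hψ : psiFun θ γ σ κ μ x = a * normPdf (μ / γ) (σ ^ 2 / (2 * γ)) x := by
        unfold psiFun
        rw [if_neg (not_le.2 hxneg)]
      rw [hψ, max_eq_right hxneg.le, max_eq_left (by linarith)]
      have hp := normPdf (μ / γ) (σ ^ 2 / (2 * γ)) x
      field_simp
      ring
    · set a := Cconst θ γ σ κ μ / Real.sqrt θ * Real.exp (κ / θ) with ha
      have hev : psiFun θ γ σ κ μ =ᶠ[nhds x]
          fun y => a * normPdf (μ / θ) (σ ^ 2 / (2 * θ)) y := by
        filter_upwards [Ioi_mem_nhds hxpos] with y hy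
        unfold psiFun
        rw [if_pos hy.le]
      have hd := (hasDerivAt_normPdf (μ / θ) hηθ x).const_mul a
      refine ⟨_, hd.congr_of_eventuallyEq hev, ?_⟩
      have hψ : psiFun θ γ σ κ μ x = a * normPdf (μ / θ) (σ ^ 2 / (2 * θ)) x := by
        unfold psiFun
        rw [if_pos hxpos.le]
      rw [hψ, max_eq_left hxpos.le, max_eq_right (by linarith)]
      field_simp
      ring
  · -- integral
    have hIci : IntegrableOn (psiFun θ γ σ κ μ) (Ici 0) := by
      refine (((integrable_normPdf (μ / θ) hηθ).const_mul
        (Cconst θ γ σ κ μ / Real.sqrt θ * Real.exp (κ / θ))).integrableOn).congr_fun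
        ?_ measurableSet_Ici
      intro y hy
      unfold psiFun
      rw [if_pos (show (0:ℝ) ≤ y from hy)]
    have hIio : IntegrableOn (psiFun θ γ σ κ μ) (Iio 0) := by
      refine (((integrable_normPdf (μ / γ) hηγ).const_mul
        (Cconst θ γ σ κ μ / Real.sqrt γ * Real.exp (κ / γ))).integrableOn).congr_fun
        ?_ measurableSet_Iio
      intro y hy
      unfold psiFun
      rw [if_neg (not_le.2 (show y < 0 from hy))]
    rw [← intervalIntegral.integral_Iio_add_Ici hIio hIci]
    have hIciEq : ∫ x in Ici (0:ℝ), psiFun θ γ σ κ μ x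
        = Cconst θ γ σ κ μ / Real.sqrt θ * Real.exp (κ / θ)
          * (1 - normCdf (μ / θ) (σ ^ 2 / (2 * θ)) 0) := by
      rw [setIntegral_congr_fun measurableSet_Ici (g := fun y =>
        Cconst θ γ σ κ μ / Real.sqrt θ * Real.exp (κ / θ)
          * normPdf (μ / θ) (σ ^ 2 / (2 * θ)) y) ?_]
      · rw [MeasureTheory.integral_const_mul]
        congr 1
        have hsplit : (∫ x in Iic (0:ℝ), normPdf (μ / θ) (σ ^ 2 / (2 * θ)) x)
            + ∫ x in Ioi (0:ℝ), normPdf (μ / θ) (σ ^ 2 / (2 * θ)) x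
            = ∫ x, normPdf (μ / θ) (σ ^ 2 / (2 * θ)) x :=
          intervalIntegral.integral_Iic_add_Ioi (integrable_normPdf _ hηθ).integrableOn
            (integrable_normPdf _ hηθ).integrableOn
        rw [integral_normPdf _ hηθ] at hsplit
        rw [setIntegral_congr_set (Ioi_ae_eq_Ici (a := (0:ℝ))).symm]
        unfold normCdf
        linarith
      · intro y hy
        unfold psiFun
        rw [if_pos (show (0:ℝ) ≤ y from hy)]
    have hIioEq : ∫ x in Iio (0:ℝ), psiFun θ γ σ κ μ x
        = Cconst θ γ σ κ μ / Real.sqrt γ * Real.exp (κ / γ)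
          * normCdf (μ / γ) (σ ^ 2 / (2 * γ)) 0 := by
      rw [setIntegral_congr_fun measurableSet_Iio (g := fun y =>
        Cconst θ γ σ κ μ / Real.sqrt γ * Real.exp (κ / γ)
          * normPdf (μ / γ) (σ ^ 2 / (2 * γ)) y) ?_]
      · rw [MeasureTheory.integral_const_mul]
        congr 1
        rw [setIntegral_congr_set (Iio_ae_eq_Iic (a := (0:ℝ)))]
        rfl
      · intro y hy
        unfold psiFun
        rw [if_neg (not_le.2 (show y < 0 from hy))]
    rw [hIciEq, hIioEq]
    have hsum : Cconst θ γ σ κ μ / Real.sqrt γ * Real.exp (κ / γ)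
          * normCdf (μ / γ) (σ ^ 2 / (2 * γ)) 0
        + Cconst θ γ σ κ μ / Real.sqrt θ * Real.exp (κ / θ)
          * (1 - normCdf (μ / θ) (σ ^ 2 / (2 * θ)) 0)
        = Cconst θ γ σ κ μ * D := by
      rw [hD, div_eq_mul_inv, div_eq_mul_inv]
      ring
    rw [hsum, hCeq, inv_mul_cancel₀ hDpos.ne']
end

section
/- Let θ, γ > 0 with θ ≤ γ. Define h₁(z) = −θz for z ≥ 0, h₁(z) = −γz for z < 0; h₂(z) = −γz for z ≥ 0, h₂(z) = −θz for z < 0. Let M : [0,∞) → ℝ be continuous with M(0) = 0, let q : [0,∞) → ℝ be continuous, and let D, V₁, V₂ : [0,∞) → ℝ be continuous functions satisfying D(t) = M(t) + ∫₀ᵗ q(s) ds, V₁(t) = M(t) + ∫₀ᵗ h₁(V₁(s)) ds, and V₂(t) = M(t) + ∫₀ᵗ h₂(V₂(s)) ds for all t ≥ 0. If h₂(D(s)) ≤ q(s) ≤ h₁(D(s)) for all s ≥ 0, then V₂(t) ≤ D(t) ≤ V₁(t) for all t ≥ 0. -/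
/-- The function `h₁` from the paper: `h₁(z) = -θz` for `z ≥ 0` and `h₁(z) = -γz` for `z < 0`. -/
noncomputable def h1 (θ γ z : ℝ) : ℝ := if 0 ≤ z then -(θ * z) else -(γ * z)

/-- The function `h₂` from the paper: `h₂(z) = -γz` for `z ≥ 0` and `h₂(z) = -θz` for `z < 0`. -/
noncomputable def h2 (θ γ z : ℝ) : ℝ := if 0 ≤ z then -(γ * z) else -(θ * z)

lemma h1_eq (θ γ z : ℝ) : h1 θ γ z = -(θ * max z 0) - γ * min z 0 := by
  unfold h1
  rcases le_or_gt 0 z with h | h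
  · simp [max_eq_left h, min_eq_right h, h]
  · simp [max_eq_right h.le, min_eq_left h.le, not_le.mpr h]

lemma h2_eq (θ γ z : ℝ) : h2 θ γ z = -(γ * max z 0) - θ * min z 0 := by
  unfold h2
  rcases le_or_gt 0 z with h | h
  · simp [max_eq_left h, min_eq_right h, h]
  · simp [max_eq_right h.le, min_eq_left h.le, not_le.mpr h]

lemma h1_cont (θ γ : ℝ) : Continuous (h1 θ γ) := by
  have : h1 θ γ = fun z => -(θ * max z 0) - γ * min z 0 := funext (h1_eq θ γ)
  rw [this]; fun_prop

lemma h2_cont (θ γ : ℝ) : Continuous (h2 θ γ) := by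
  have : h2 θ γ = fun z => -(γ * max z 0) - θ * min z 0 := funext (h2_eq θ γ)
  rw [this]; fun_prop

lemma h1_anti (θ γ : ℝ) (hθ : 0 < θ) (hγ : 0 < γ) : Antitone (h1 θ γ) := by
  intro a b hab
  unfold h1
  split_ifs <;> nlinarith

lemma h2_anti (θ γ : ℝ) (hθ : 0 < θ) (hγ : 0 < γ) : Antitone (h2 θ γ) := by
  intro a b hab
  unfold h2
  split_ifs <;> nlinarith

lemma key (w p : ℝ → ℝ) (hw : ContinuousOn w (Set.Ici 0))
    (hp : ContinuousOn p (Set.Ici 0))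
    (hweq : ∀ t : ℝ, 0 ≤ t → w t = ∫ s in (0:ℝ)..t, p s)
    (hpos : ∀ s : ℝ, 0 ≤ s → 0 < w s → p s ≤ 0) :
    ∀ t : ℝ, 0 ≤ t → w t ≤ 0 := by
  intro t₀ ht₀
  by_contra hcon
  push_neg at hcon
  have hw0 : w 0 = 0 := by simpa using hweq 0 le_rfl
  set S : Set ℝ := Set.Icc 0 t₀ ∩ w ⁻¹' Set.Iic 0 with hSdef
  have h0S : (0:ℝ) ∈ S := ⟨⟨le_rfl, ht₀⟩, by simp [hw0]⟩
  have hSne : S.Nonempty := ⟨0, h0S⟩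
  have hSbdd : BddAbove S := ⟨t₀, fun x hx => hx.1.2⟩
  have hSclosed : IsClosed S := by
    exact ContinuousOn.preimage_isClosed_of_isClosed
      (hw.mono (fun x hx => hx.1)) isClosed_Icc isClosed_Iic
  set τ := sSup S with hτdef
  have hτS : τ ∈ S := hSclosed.csSup_mem hSne hSbdd
  have hτ0 : 0 ≤ τ := hτS.1.1
  have hτt : τ ≤ t₀ := hτS.1.2
  have hwτ : w τ ≤ 0 := hτS.2
  have hτlt : τ < t₀ := lt_of_le_of_ne hτt (fun h => by rw [h] at hwτ; linarith)
  have hIoc : ∀ s ∈ Set.Ioc τ t₀, 0 < w s := by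
    intro s hs
    by_contra hns; push_neg at hns
    have hsS : s ∈ S := ⟨⟨le_trans hτ0 hs.1.le, hs.2⟩, hns⟩
    exact absurd (le_csSup hSbdd hsS) (not_le.mpr hs.1)
  have hint : ∀ a b : ℝ, 0 ≤ a → a ≤ b → IntervalIntegrable p MeasureTheory.volume a b := by
    intro a b ha hab
    exact (hp.mono (by rw [Set.uIcc_of_le hab]; exact fun x hx => le_trans ha hx.1)).intervalIntegrable
  have hsplit : w t₀ = w τ + ∫ s in τ..t₀, p s := by
    rw [hweq t₀ ht₀, hweq τ hτ0,
      ← intervalIntegral.integral_add_adjacent_intervals (hint 0 τ le_rfl hτ0)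
        (hint τ t₀ hτ0 hτt)]
  have hI : (∫ s in τ..t₀, p s) ≤ 0 := by
    rw [intervalIntegral.integral_of_le hτt]
    exact MeasureTheory.setIntegral_nonpos measurableSet_Ioc
      (fun x hx => hpos x (le_trans hτ0 hx.1.le) (hIoc x hx))
  linarith

/-- Comparison lemma: if `D(t) = M(t) + ∫₀ᵗ q(s) ds`,
`V₁(t) = M(t) + ∫₀ᵗ h₁(V₁(s)) ds`, `V₂(t) = M(t) + ∫₀ᵗ h₂(V₂(s)) ds`, with `M(0) = 0` and
`h₂(D(s)) ≤ q(s) ≤ h₁(D(s))` for all `s ≥ 0`, then `V₂(t) ≤ D(t) ≤ V₁(t)` for all `t ≥ 0`. -/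
theorem stmt_17 (θ γ : ℝ) (hθ : 0 < θ) (hγ : 0 < γ) (hθγ : θ ≤ γ)
    (M q D V₁ V₂ : ℝ → ℝ)
    (hM : ContinuousOn M (Set.Ici 0)) (hM0 : M 0 = 0)
    (hq : ContinuousOn q (Set.Ici 0))
    (hD : ContinuousOn D (Set.Ici 0))
    (hV₁ : ContinuousOn V₁ (Set.Ici 0)) (hV₂ : ContinuousOn V₂ (Set.Ici 0))
    (hDeq : ∀ t : ℝ, 0 ≤ t → D t = M t + ∫ s in (0:ℝ)..t, q s)
    (hV₁eq : ∀ t : ℝ, 0 ≤ t → V₁ t = M t + ∫ s in (0:ℝ)..t, h1 θ γ (V₁ s))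
    (hV₂eq : ∀ t : ℝ, 0 ≤ t → V₂ t = M t + ∫ s in (0:ℝ)..t, h2 θ γ (V₂ s))
    (hcomp : ∀ s : ℝ, 0 ≤ s → h2 θ γ (D s) ≤ q s ∧ q s ≤ h1 θ γ (D s)) :
    ∀ t : ℝ, 0 ≤ t → V₂ t ≤ D t ∧ D t ≤ V₁ t := by
  have hintgen : ∀ (f : ℝ → ℝ), ContinuousOn f (Set.Ici 0) → ∀ t : ℝ, 0 ≤ t →
      IntervalIntegrable f MeasureTheory.volume 0 t := by
    intro f hf t ht
    exact (hf.mono (by rw [Set.uIcc_of_le ht]; exact fun x hx => hx.1)).intervalIntegrable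
  have hqI := hintgen q hq
  have hh1I := hintgen (fun s => h1 θ γ (V₁ s)) ((h1_cont θ γ).comp_continuousOn hV₁)
  have hh2I := hintgen (fun s => h2 θ γ (V₂ s)) ((h2_cont θ γ).comp_continuousOn hV₂)
  -- D ≤ V₁
  have hDV₁ : ∀ t : ℝ, 0 ≤ t → D t - V₁ t ≤ 0 := by
    apply key (fun t => D t - V₁ t) (fun s => q s - h1 θ γ (V₁ s))
      (hD.sub hV₁) (hq.sub ((h1_cont θ γ).comp_continuousOn hV₁))
    · intro t ht
      rw [hDeq t ht, hV₁eq t ht, intervalIntegral.integral_sub (hqI t ht) (hh1I t ht)]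
      ring
    · intro s hs hpos
      have hlt : V₁ s < D s := by linarith
      have := (hcomp s hs).2
      have h2' : h1 θ γ (D s) ≤ h1 θ γ (V₁ s) := h1_anti θ γ hθ hγ hlt.le
      linarith
  -- V₂ ≤ D
  have hV₂D : ∀ t : ℝ, 0 ≤ t → V₂ t - D t ≤ 0 := by
    apply key (fun t => V₂ t - D t) (fun s => h2 θ γ (V₂ s) - q s)
      (hV₂.sub hD) (((h2_cont θ γ).comp_continuousOn hV₂).sub hq)
    · intro t ht
      rw [hDeq t ht, hV₂eq t ht, intervalIntegral.integral_sub (hh2I t ht) (hqI t ht)]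
      ring
    · intro s hs hpos
      have hlt : D s < V₂ s := by linarith
      have := (hcomp s hs).1
      have h2' : h2 θ γ (V₂ s) ≤ h2 θ γ (D s) := h2_anti θ γ hθ hγ hlt.le
      linarith
  intro t ht
  exact ⟨by linarith [hV₂D t ht], by linarith [hDV₁ t ht]⟩
end
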